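/- arXiv:1506.00559 — 6 statements merged into one kernel-verified Lean document; each statement's English description precedes it below -/
import Mathlib

section
/- Let Y₁, Y₂ ~ Gamma(1) and Y_α ~ Gamma(α) be mutually independent with α > 2, β > 0, and set Xᵢ = β·Yᵢ/Y_α. Then the correlation coefficient of X₁ and X₂ equals 1/α. -/
open MeasureTheory ProbabilityTheory Real

lemma gammaMeasure_ae_pos (a r : ℝ) : ∀ᵐ x ∂ gammaMeasure a r, 0 < x := by
  rw [ae_iff]
  have h : {x : ℝ | ¬ 0 < x} = Set.Iic 0 := by ext x; simp
  rw [h, gammaMeasure, withDensity_apply _ measurableSet_Iic]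
  have h1 : ∫⁻ x in Set.Iic 0, gammaPDF a r x = ∫⁻ x in Set.Iio 0, gammaPDF a r x :=
    setLIntegral_congr Iio_ae_eq_Iic.symm
  rw [h1, lintegral_gammaPDF_of_nonpos le_rfl]

lemma gamma_moment {a p : ℝ} (ha : 0 < a) (hap : 0 < a + p) :
    ∫ x, (Set.Ioi (0:ℝ)).indicator (fun x => x ^ p) x ∂ gammaMeasure a 1
      = Gamma (a + p) / Gamma a := by
  have hd : gammaMeasure a 1
      = volume.withDensity (fun x => ((gammaPDFReal a 1 x).toNNReal : ENNReal)) := rfl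
  rw [hd, integral_withDensity_eq_integral_smul
    ((measurable_gammaPDFReal a 1).real_toNNReal)]
  have h1 : ∀ x : ℝ, (gammaPDFReal a 1 x).toNNReal • (Set.Ioi (0:ℝ)).indicator (fun x => x ^ p) x
      = (Set.Ioi (0:ℝ)).indicator (fun x => (Gamma a)⁻¹ * (exp (-x) * x ^ (a + p - 1))) x := by
    intro x
    rw [NNReal.smul_def, Real.coe_toNNReal _ (gammaPDFReal_nonneg ha one_pos x), smul_eq_mul]
    by_cases hx : x ∈ Set.Ioi (0:ℝ)
    · rw [Set.indicator_of_mem (show x ∈ Set.Ioi (0:ℝ) from hx), Set.indicator_of_mem (show x ∈ Set.Ioi (0:ℝ) from hx)]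
      have hx0 : (0:ℝ) < x := hx
      rw [gammaPDFReal, if_pos hx0.le, one_rpow, one_mul]
      have h2 : x ^ (a - 1) * x ^ p = x ^ (a + p - 1) := by
        rw [← rpow_add hx0]; ring_nf
      rw [← h2]; ring
    · rw [Set.indicator_of_notMem hx, Set.indicator_of_notMem hx, mul_zero]
  simp_rw [h1]
  rw [integral_indicator measurableSet_Ioi, integral_const_mul,
    ← Gamma_eq_integral hap]
  rw [inv_mul_eq_div]

/-- the correlation coefficient of two components of the dependent Pareto
model equals `1/α` for `α > 2`. -/
theorem multivariate_pareto_correlation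
    {Ω : Type*} [MeasureSpace Ω] [IsProbabilityMeasure (ℙ : Measure Ω)]
    (Y₁ Y₂ Yα : Ω → ℝ) (hY₁ : Measurable Y₁) (hY₂ : Measurable Y₂) (hYα : Measurable Yα)
    (α β : ℝ) (hα : 2 < α) (hβ : 0 < β)
    (hind : iIndepFun ![Y₁, Y₂, Yα] ℙ)
    (hlaw₁ : Measure.map Y₁ ℙ = gammaMeasure 1 1)
    (hlaw₂ : Measure.map Y₂ ℙ = gammaMeasure 1 1)
    (hlawα : Measure.map Yα ℙ = gammaMeasure α 1)
    (X₁ X₂ : Ω → ℝ)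
    (hX₁ : X₁ = fun ω => β * Y₁ ω / Yα ω) (hX₂ : X₂ = fun ω => β * Y₂ ω / Yα ω) :
    ((∫ ω, X₁ ω * X₂ ω ∂ℙ) - (∫ ω, X₁ ω ∂ℙ) * (∫ ω, X₂ ω ∂ℙ)) /
      Real.sqrt
        (((∫ ω, X₁ ω ^ 2 ∂ℙ) - (∫ ω, X₁ ω ∂ℙ) ^ 2) *
          ((∫ ω, X₂ ω ^ 2 ∂ℙ) - (∫ ω, X₂ ω ∂ℙ) ^ 2)) = 1 / α := by
  have hα0 : (0:ℝ) < α := by linarith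
  have hα1 : (0:ℝ) < α - 1 := by linarith
  have hα2 : (0:ℝ) < α - 2 := by linarith
  -- Gamma function facts
  have hG1 : Gamma α = (α - 1) * Gamma (α - 1) := by
    have h := Real.Gamma_add_one (ne_of_gt hα1)
    rw [show α - 1 + 1 = α by ring] at h
    exact h
  have hG2 : Gamma (α - 1) = (α - 2) * Gamma (α - 2) := by
    have h := Real.Gamma_add_one (ne_of_gt hα2)
    rw [show α - 2 + 1 = α - 1 by ring] at h
    exact h
  -- moment values on ℝ
  have g11 : ∫ x, (Set.Ioi (0:ℝ)).indicator (fun x => x ^ (1:ℝ)) x ∂ gammaMeasure 1 1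
      = 1 := by
    rw [gamma_moment one_pos (by norm_num)]
    rw [show (1:ℝ) + 1 = ((1:ℕ):ℝ) + 1 by norm_num, Real.Gamma_nat_eq_factorial,
      Real.Gamma_one]
    norm_num
  have g12 : ∫ x, (Set.Ioi (0:ℝ)).indicator (fun x => x ^ (2:ℝ)) x ∂ gammaMeasure 1 1
      = 2 := by
    rw [gamma_moment one_pos (by norm_num)]
    rw [show (1:ℝ) + 2 = ((2:ℕ):ℝ) + 1 by norm_num, Real.Gamma_nat_eq_factorial,
      Real.Gamma_one]
    norm_num
  have gm1 : ∫ x, (Set.Ioi (0:ℝ)).indicator (fun x => x ^ (-1:ℝ)) x ∂ gammaMeasure α 1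
      = (α - 1)⁻¹ := by
    rw [gamma_moment hα0 (by linarith), show α + -1 = α - 1 by ring, hG1]
    rw [div_eq_iff (by positivity)]
    field_simp
  have gm2 : ∫ x, (Set.Ioi (0:ℝ)).indicator (fun x => x ^ (-2:ℝ)) x ∂ gammaMeasure α 1
      = ((α - 1) * (α - 2))⁻¹ := by
    rw [gamma_moment hα0 (by linarith), show α + -2 = α - 2 by ring, hG1, hG2]
    rw [div_eq_iff (by positivity)]
    have hΓ : (0:ℝ) < Gamma (α - 2) := Gamma_pos_of_pos hα2
    field_simp
  -- transfer to Ω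
  have EY1 : ∫ ω, Y₁ ω ∂ℙ = 1 := by
    calc ∫ ω, Y₁ ω ∂ℙ = ∫ x, x ∂(Measure.map Y₁ ℙ) :=
          (integral_map hY₁.aemeasurable aestronglyMeasurable_id).symm
      _ = ∫ x, (Set.Ioi (0:ℝ)).indicator (fun x => x ^ (1:ℝ)) x ∂ gammaMeasure 1 1 := by
          rw [hlaw₁]
          refine integral_congr_ae ?_
          filter_upwards [gammaMeasure_ae_pos 1 1] with x hx
          rw [Set.indicator_of_mem (show x ∈ Set.Ioi (0:ℝ) from hx), rpow_one]
      _ = 1 := g11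
  have EY2 : ∫ ω, Y₂ ω ∂ℙ = 1 := by
    calc ∫ ω, Y₂ ω ∂ℙ = ∫ x, x ∂(Measure.map Y₂ ℙ) :=
          (integral_map hY₂.aemeasurable aestronglyMeasurable_id).symm
      _ = ∫ x, (Set.Ioi (0:ℝ)).indicator (fun x => x ^ (1:ℝ)) x ∂ gammaMeasure 1 1 := by
          rw [hlaw₂]
          refine integral_congr_ae ?_
          filter_upwards [gammaMeasure_ae_pos 1 1] with x hx
          rw [Set.indicator_of_mem (show x ∈ Set.Ioi (0:ℝ) from hx), rpow_one]
      _ = 1 := g11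
  have EY1sq : ∫ ω, (Y₁ ω) ^ 2 ∂ℙ = 2 := by
    calc ∫ ω, (Y₁ ω) ^ 2 ∂ℙ = ∫ x, x ^ 2 ∂(Measure.map Y₁ ℙ) :=
          (integral_map hY₁.aemeasurable
            (measurable_id.pow_const 2).aestronglyMeasurable).symm
      _ = ∫ x, (Set.Ioi (0:ℝ)).indicator (fun x => x ^ (2:ℝ)) x ∂ gammaMeasure 1 1 := by
          rw [hlaw₁]
          refine integral_congr_ae ?_
          filter_upwards [gammaMeasure_ae_pos 1 1] with x hx
          rw [Set.indicator_of_mem (show x ∈ Set.Ioi (0:ℝ) from hx), show (2:ℝ) = ((2:ℕ):ℝ) by norm_num,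
            rpow_natCast]
      _ = 2 := g12
  have EY2sq : ∫ ω, (Y₂ ω) ^ 2 ∂ℙ = 2 := by
    calc ∫ ω, (Y₂ ω) ^ 2 ∂ℙ = ∫ x, x ^ 2 ∂(Measure.map Y₂ ℙ) :=
          (integral_map hY₂.aemeasurable
            (measurable_id.pow_const 2).aestronglyMeasurable).symm
      _ = ∫ x, (Set.Ioi (0:ℝ)).indicator (fun x => x ^ (2:ℝ)) x ∂ gammaMeasure 1 1 := by
          rw [hlaw₂]
          refine integral_congr_ae ?_
          filter_upwards [gammaMeasure_ae_pos 1 1] with x hx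
          rw [Set.indicator_of_mem (show x ∈ Set.Ioi (0:ℝ) from hx), show (2:ℝ) = ((2:ℕ):ℝ) by norm_num,
            rpow_natCast]
      _ = 2 := g12
  have EYinv : ∫ ω, (Yα ω)⁻¹ ∂ℙ = (α - 1)⁻¹ := by
    calc ∫ ω, (Yα ω)⁻¹ ∂ℙ = ∫ x, x⁻¹ ∂(Measure.map Yα ℙ) :=
          (integral_map hYα.aemeasurable measurable_inv.aestronglyMeasurable).symm
      _ = ∫ x, (Set.Ioi (0:ℝ)).indicator (fun x => x ^ (-1:ℝ)) x ∂ gammaMeasure α 1 := by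
          rw [hlawα]
          refine integral_congr_ae ?_
          filter_upwards [gammaMeasure_ae_pos α 1] with x hx
          rw [Set.indicator_of_mem (show x ∈ Set.Ioi (0:ℝ) from hx), rpow_neg_one]
      _ = (α - 1)⁻¹ := gm1
  have EYinv2 : ∫ ω, ((Yα ω) ^ 2)⁻¹ ∂ℙ = ((α - 1) * (α - 2))⁻¹ := by
    calc ∫ ω, ((Yα ω) ^ 2)⁻¹ ∂ℙ = ∫ x, (x ^ 2)⁻¹ ∂(Measure.map Yα ℙ) :=
          (integral_map hYα.aemeasurable
            ((measurable_id.pow_const 2).inv).aestronglyMeasurable).symm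
      _ = ∫ x, (Set.Ioi (0:ℝ)).indicator (fun x => x ^ (-2:ℝ)) x ∂ gammaMeasure α 1 := by
          rw [hlawα]
          refine integral_congr_ae ?_
          filter_upwards [gammaMeasure_ae_pos α 1] with x hx
          rw [Set.indicator_of_mem (show x ∈ Set.Ioi (0:ℝ) from hx), show (-2:ℝ) = -((2:ℕ):ℝ) by norm_num,
            rpow_neg (le_of_lt hx), rpow_natCast]
      _ = ((α - 1) * (α - 2))⁻¹ := gm2
  -- independence
  have hmeas : ∀ i, Measurable (![Y₁, Y₂, Yα] i) := by
    intro i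
    fin_cases i
    · exact hY₁
    · exact hY₂
    · exact hYα
  have h01 : IndepFun Y₁ Y₂ ℙ := hind.indepFun (show (0:Fin 3) ≠ 1 by decide)
  have h02 : IndepFun Y₁ Yα ℙ := hind.indepFun (show (0:Fin 3) ≠ 2 by decide)
  have h12 : IndepFun Y₂ Yα ℙ := hind.indepFun (show (1:Fin 3) ≠ 2 by decide)
  have hprod : IndepFun (fun ω => (Y₁ ω, Y₂ ω)) Yα ℙ :=
    hind.indepFun_prodMk hmeas 0 1 2 (by decide) (by decide)
  have hginv : Measurable (fun x : ℝ => x⁻¹) := measurable_inv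
  have hg2 : Measurable (fun x : ℝ => (x ^ 2)⁻¹) := (measurable_id.pow_const 2).inv
  -- E[X₁]
  have E1 : ∫ ω, X₁ ω ∂ℙ = β * (α - 1)⁻¹ := by
    rw [hX₁]
    simp only [show ∀ ω, β * Y₁ ω / Yα ω = β * (Y₁ ω * (Yα ω)⁻¹) from
      fun ω => by rw [div_eq_mul_inv, mul_assoc]]
    rw [integral_const_mul]
    rw [show (∫ ω, Y₁ ω * (Yα ω)⁻¹ ∂ℙ) = (∫ ω, Y₁ ω ∂ℙ) * ∫ ω, (Yα ω)⁻¹ ∂ℙ from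
      (h02.comp measurable_id hginv).integral_fun_mul_eq_mul_integral hY₁.aestronglyMeasurable
        (hginv.comp hYα).aestronglyMeasurable]
    rw [EY1, EYinv, one_mul]
  have E2 : ∫ ω, X₂ ω ∂ℙ = β * (α - 1)⁻¹ := by
    rw [hX₂]
    simp only [show ∀ ω, β * Y₂ ω / Yα ω = β * (Y₂ ω * (Yα ω)⁻¹) from
      fun ω => by rw [div_eq_mul_inv, mul_assoc]]
    rw [integral_const_mul]
    rw [show (∫ ω, Y₂ ω * (Yα ω)⁻¹ ∂ℙ) = (∫ ω, Y₂ ω ∂ℙ) * ∫ ω, (Yα ω)⁻¹ ∂ℙ from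
      (h12.comp measurable_id hginv).integral_fun_mul_eq_mul_integral hY₂.aestronglyMeasurable
        (hginv.comp hYα).aestronglyMeasurable]
    rw [EY2, EYinv, one_mul]
  -- E[X₁ X₂]
  have E12 : ∫ ω, X₁ ω * X₂ ω ∂ℙ = β ^ 2 * ((α - 1) * (α - 2))⁻¹ := by
    rw [hX₁, hX₂]
    simp only [show ∀ ω, (β * Y₁ ω / Yα ω) * (β * Y₂ ω / Yα ω)
        = β ^ 2 * (Y₁ ω * Y₂ ω * ((Yα ω) ^ 2)⁻¹) from fun ω => by
      rw [div_mul_div_comm, div_eq_mul_inv, ← sq (Yα ω)]; ring]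
    rw [integral_const_mul]
    rw [show (∫ ω, Y₁ ω * Y₂ ω * ((Yα ω) ^ 2)⁻¹ ∂ℙ)
        = (∫ ω, Y₁ ω * Y₂ ω ∂ℙ) * ∫ ω, ((Yα ω) ^ 2)⁻¹ ∂ℙ from
      (hprod.comp (measurable_fst.mul measurable_snd) hg2).integral_fun_mul_eq_mul_integral
        (hY₁.mul hY₂).aestronglyMeasurable (hg2.comp hYα).aestronglyMeasurable]
    rw [show (∫ ω, Y₁ ω * Y₂ ω ∂ℙ) = (∫ ω, Y₁ ω ∂ℙ) * ∫ ω, Y₂ ω ∂ℙ from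
      h01.integral_fun_mul_eq_mul_integral hY₁.aestronglyMeasurable hY₂.aestronglyMeasurable]
    rw [EY1, EY2, EYinv2]
    ring
  -- E[X₁²], E[X₂²]
  have E11 : ∫ ω, X₁ ω ^ 2 ∂ℙ = β ^ 2 * (2 * ((α - 1) * (α - 2))⁻¹) := by
    rw [hX₁]
    simp only [show ∀ ω, (β * Y₁ ω / Yα ω) ^ 2
        = β ^ 2 * ((Y₁ ω ^ 2) * ((Yα ω) ^ 2)⁻¹) from fun ω => by
      rw [div_pow, mul_pow, div_eq_mul_inv]; ring]
    rw [integral_const_mul]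
    rw [show (∫ ω, Y₁ ω ^ 2 * ((Yα ω) ^ 2)⁻¹ ∂ℙ)
        = (∫ ω, Y₁ ω ^ 2 ∂ℙ) * ∫ ω, ((Yα ω) ^ 2)⁻¹ ∂ℙ from
      (h02.comp (measurable_id.pow_const 2) hg2).integral_fun_mul_eq_mul_integral
        (hY₁.pow_const 2).aestronglyMeasurable (hg2.comp hYα).aestronglyMeasurable]
    rw [EY1sq, EYinv2]
  have E22 : ∫ ω, X₂ ω ^ 2 ∂ℙ = β ^ 2 * (2 * ((α - 1) * (α - 2))⁻¹) := by
    rw [hX₂]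
    simp only [show ∀ ω, (β * Y₂ ω / Yα ω) ^ 2
        = β ^ 2 * ((Y₂ ω ^ 2) * ((Yα ω) ^ 2)⁻¹) from fun ω => by
      rw [div_pow, mul_pow, div_eq_mul_inv]; ring]
    rw [integral_const_mul]
    rw [show (∫ ω, Y₂ ω ^ 2 * ((Yα ω) ^ 2)⁻¹ ∂ℙ)
        = (∫ ω, Y₂ ω ^ 2 ∂ℙ) * ∫ ω, ((Yα ω) ^ 2)⁻¹ ∂ℙ from
      (h12.comp (measurable_id.pow_const 2) hg2).integral_fun_mul_eq_mul_integral
        (hY₂.pow_const 2).aestronglyMeasurable (hg2.comp hYα).aestronglyMeasurable]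
    rw [EY2sq, EYinv2]
  -- final arithmetic
  rw [E1, E2, E12, E11, E22]
  have hV : β ^ 2 * (2 * ((α - 1) * (α - 2))⁻¹) - (β * (α - 1)⁻¹) ^ 2
      = β ^ 2 * α / ((α - 1) ^ 2 * (α - 2)) := by
    field_simp
    ring
  have hC : β ^ 2 * ((α - 1) * (α - 2))⁻¹ - (β * (α - 1)⁻¹) * (β * (α - 1)⁻¹)
      = β ^ 2 / ((α - 1) ^ 2 * (α - 2)) := by
    field_simp
    ring
  rw [hV, hC, Real.sqrt_mul_self (by positivity)]
  rw [div_eq_div_iff (by positivity) (by positivity)]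
  field_simp
end

section
/- Let Y₁,…,Yₙ ~ Gamma(1) and Y_α ~ Gamma(α) be mutually independent with α > 0, β > 0, and Xᵢ = β·Yᵢ/Y_α. For nonnegative reals r₁,…,rₙ with A = r₁ + ⋯ + rₙ < α, the mixed moment satisfies E[X₁^{r₁} ⋯ Xₙ^{rₙ}] = (Γ(α − A)/Γ(α)) · ∏ᵢ β^{rᵢ} Γ(1 + rᵢ). -/
open MeasureTheory ProbabilityTheory Real Set

lemma my_gammaMeasure_Iic_zero (a r : ℝ) : gammaMeasure a r (Iic 0) = 0 := by
  have h1 : gammaMeasure a r (Iio 0) = 0 := by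
    rw [gammaMeasure, withDensity_apply _ measurableSet_Iio]
    exact lintegral_gammaPDF_of_nonpos le_rfl
  have h0 : gammaMeasure a r {0} = 0 :=
    withDensity_absolutelyContinuous _ _ (measure_singleton 0)
  refine measure_mono_null (fun x hx => ?_) (measure_union_null h1 h0)
  have hx' : x ≤ 0 := hx
  rcases hx'.lt_or_eq with h | h
  · exact Or.inl h
  · exact Or.inr h

lemma my_ae_pos_of_law {Ω : Type*} [MeasureSpace Ω] {Z : Ω → ℝ} (hZ : Measurable Z)
    {a r : ℝ} (hlaw : Measure.map Z ℙ = gammaMeasure a r) : ∀ᵐ ω ∂ℙ, 0 < Z ω := by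
  have : ℙ (Z ⁻¹' (Iic 0)) = 0 := by
    rw [← Measure.map_apply hZ measurableSet_Iic, hlaw]
    exact my_gammaMeasure_Iic_zero a r
  filter_upwards [measure_eq_zero_iff_ae_notMem.mp this] with ω hω
  simpa using hω

lemma my_gammaMeasure_ae_pos (a r : ℝ) : ∀ᵐ x ∂(gammaMeasure a r), 0 < x := by
  rw [ae_iff]
  refine measure_mono_null (fun x hx => ?_) (my_gammaMeasure_Iic_zero a r)
  simpa using hx

lemma my_gamma_moment {a s : ℝ} (ha : 0 < a) (hs : 0 < a + s) :
    ∫ x, x ^ s ∂(gammaMeasure a 1) = Real.Gamma (a + s) / Real.Gamma a := by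
  have hpdfm : Measurable fun x => (gammaPDFReal a 1 x).toNNReal :=
    (measurable_gammaPDFReal a 1).real_toNNReal
  have hrw : gammaPDF a 1 = fun x => ((gammaPDFReal a 1 x).toNNReal : ENNReal) := rfl
  rw [gammaMeasure, hrw, integral_withDensity_eq_integral_smul hpdfm]
  have h1 : ∀ x, (gammaPDFReal a 1 x).toNNReal • x ^ s = gammaPDFReal a 1 x * x ^ s := by
    intro x
    simp [NNReal.smul_def, smul_eq_mul, Real.coe_toNNReal _ (gammaPDFReal_nonneg ha one_pos x)]
  simp_rw [h1]
  have h2 : (fun x => gammaPDFReal a 1 x * x ^ s) =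
      (Ici (0:ℝ)).indicator (fun x => gammaPDFReal a 1 x * x ^ s) := by
    funext x
    by_cases hx : 0 ≤ x
    · rw [Set.indicator_of_mem (show x ∈ Ici (0:ℝ) from hx)]
    · rw [Set.indicator_of_notMem (show x ∉ Ici (0:ℝ) from hx), gammaPDFReal, if_neg hx,
        zero_mul]
  rw [h2, integral_indicator measurableSet_Ici, integral_Ici_eq_integral_Ioi]
  have h3 : ∀ x ∈ Ioi (0:ℝ), gammaPDFReal a 1 x * x ^ s =
      (Real.Gamma a)⁻¹ * (Real.exp (-x) * x ^ (a + s - 1)) := by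
    intro x hx
    have hx' : (0:ℝ) < x := hx
    rw [gammaPDFReal, if_pos hx'.le, Real.one_rpow, one_div,
      show a + s - 1 = (a - 1) + s by ring, Real.rpow_add hx']
    ring_nf
  rw [setIntegral_congr_fun measurableSet_Ioi h3, integral_const_mul,
    ← Real.Gamma_eq_integral hs]
  rw [div_eq_inv_mul]

lemma my_integral_prod_indep {Ω : Type*} [MeasureSpace Ω] [IsProbabilityMeasure (ℙ : Measure Ω)]
    {κ : Type*} (g : κ → Ω → ℝ) (hmeas : ∀ i, Measurable (g i)) (hnn : ∀ i ω, 0 ≤ g i ω)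
    (hind : iIndepFun g ℙ) (s : Finset κ) :
    ∫ ω, ∏ i ∈ s, g i ω ∂ℙ = ∏ i ∈ s, ∫ ω, g i ω ∂ℙ := by
  classical
  induction s using Finset.induction_on with
  | empty => simp
  | @insert i s hi ih =>
    simp_rw [Finset.prod_insert hi]
    have hindep : IndepFun (g i) (∏ j ∈ s, g j) ℙ :=
      (hind.indepFun_finset_prod_of_notMem hmeas hi).symm
    have hprodnn : 0 ≤ (∏ j ∈ s, g j) := by
      intro ω
      rw [Finset.prod_apply]
      exact Finset.prod_nonneg fun j _ => hnn j ω
    have hm : AEMeasurable (∏ j ∈ s, g j) ℙ := by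
      rw [Finset.prod_fn]
      exact (Finset.measurable_prod s fun j _ => hmeas j).aemeasurable
    have := hindep.integral_mul_eq_mul_integral (hmeas i).aemeasurable.aestronglyMeasurable hm.aestronglyMeasurable
    calc ∫ ω, g i ω * ∏ j ∈ s, g j ω ∂ℙ
        = ∫ ω, (g i * ∏ j ∈ s, g j) ω ∂ℙ := by
          refine integral_congr_ae (.of_forall fun ω => ?_)
          simp [Finset.prod_apply]
      _ = (∫ ω, g i ω ∂ℙ) * ∫ ω, (∏ j ∈ s, g j) ω ∂ℙ := this
      _ = (∫ ω, g i ω ∂ℙ) * ∏ j ∈ s, ∫ ω, g j ω ∂ℙ := by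
          rw [← ih]
          congr 1
          refine integral_congr_ae (.of_forall fun ω => ?_)
          simp [Finset.prod_apply]

/-- mixed moments of the multivariate dependent Pareto model:
`E[∏ Xᵢ^{rᵢ}] = Γ(α−A)/Γ(α) ∏ β^{rᵢ} Γ(1+rᵢ)` when `A = Σ rᵢ < α`. -/
theorem multivariate_pareto_mixed_moments
    {Ω : Type*} [MeasureSpace Ω] [IsProbabilityMeasure (ℙ : Measure Ω)]
    (n : ℕ) (Y : Fin n → Ω → ℝ) (Yα : Ω → ℝ)
    (hY : ∀ i, Measurable (Y i)) (hYα : Measurable Yα)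
    (α β : ℝ) (hα : 0 < α) (hβ : 0 < β)
    (hind : iIndepFun
      (fun o : Option (Fin n) => o.elim Yα Y) ℙ)
    (hlawY : ∀ i, Measure.map (Y i) ℙ = gammaMeasure 1 1)
    (hlawα : Measure.map Yα ℙ = gammaMeasure α 1)
    (r : Fin n → ℝ) (hr : ∀ i, 0 ≤ r i) (hA : ∑ i, r i < α) :
    ∫ ω, ∏ i, (β * Y i ω / Yα ω) ^ (r i) ∂ℙ =
      Real.Gamma (α - ∑ i, r i) / Real.Gamma α *
        ∏ i, β ^ (r i) * Real.Gamma (1 + r i) := by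
  set A := ∑ i, r i with hA_def
  set g : Option (Fin n) → Ω → ℝ :=
    fun o => o.elim (fun ω => |Yα ω| ^ (-A)) (fun i ω => |β * Y i ω| ^ (r i)) with hg_def
  have hgmeas : ∀ o, Measurable (g o) := by
    rintro (_ | i) <;> simp only [hg_def, Option.elim] <;> fun_prop
  have hgnn : ∀ o ω, 0 ≤ g o ω := by
    rintro (_ | i) ω <;> exact Real.rpow_nonneg (abs_nonneg _) _
  have hindg : iIndepFun g ℙ := by
    have h := hind.comp
      (fun o => o.elim (fun x : ℝ => |x| ^ (-A)) (fun i (x : ℝ) => |β * x| ^ (r i)))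
      (by rintro (_ | i) <;> simp only [Option.elim] <;> fun_prop)
    convert h using 1
    funext o
    cases o <;> rfl
  have hposα : ∀ᵐ ω ∂ℙ, 0 < Yα ω := my_ae_pos_of_law hYα hlawα
  have hposY : ∀ᵐ ω ∂ℙ, ∀ i, 0 < Y i ω :=
    ae_all_iff.mpr fun i => my_ae_pos_of_law (hY i) (hlawY i)
  have key : ∫ ω, ∏ i, (β * Y i ω / Yα ω) ^ (r i) ∂ℙ =
      ∫ ω, ∏ o : Option (Fin n), g o ω ∂ℙ := by
    refine integral_congr_ae ?_
    filter_upwards [hposα, hposY] with ω h0 h1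
    rw [Fintype.prod_option]
    simp only [hg_def, Option.elim]
    calc ∏ i, (β * Y i ω / Yα ω) ^ (r i)
        = ∏ i, (|β * Y i ω| ^ (r i) * |Yα ω| ^ (-(r i))) := by
          refine Finset.prod_congr rfl fun i _ => ?_
          rw [abs_of_pos (mul_pos hβ (h1 i)), abs_of_pos h0,
            Real.div_rpow (mul_pos hβ (h1 i)).le h0.le, Real.rpow_neg h0.le, div_eq_mul_inv]
      _ = (∏ i, |β * Y i ω| ^ (r i)) * ∏ i, |Yα ω| ^ (-(r i)) := Finset.prod_mul_distrib
      _ = (∏ i, |β * Y i ω| ^ (r i)) * |Yα ω| ^ (-A) := by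
          rw [← Real.rpow_sum_of_pos (abs_pos.mpr h0.ne') (fun i => -(r i)) Finset.univ]
          congr 1
          rw [Finset.sum_neg_distrib]
      _ = |Yα ω| ^ (-A) * ∏ i, |β * Y i ω| ^ (r i) := mul_comm _ _
  have hnone : ∫ ω, |Yα ω| ^ (-A) ∂ℙ = Real.Gamma (α - A) / Real.Gamma α := by
    have hsm : AEStronglyMeasurable (fun x : ℝ => |x| ^ (-A)) (Measure.map Yα ℙ) :=
      (by fun_prop : Measurable fun x : ℝ => |x| ^ (-A)).aestronglyMeasurable
    rw [show (∫ ω, |Yα ω| ^ (-A) ∂ℙ) = ∫ x, |x| ^ (-A) ∂(Measure.map Yα ℙ) from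
      (integral_map hYα.aemeasurable hsm).symm, hlawα]
    have : ∫ x, |x| ^ (-A) ∂(gammaMeasure α 1) = ∫ x, x ^ (-A) ∂(gammaMeasure α 1) := by
      refine integral_congr_ae ?_
      filter_upwards [my_gammaMeasure_ae_pos α 1] with x hx
      rw [abs_of_pos hx]
    rw [this, my_gamma_moment hα (by linarith : 0 < α + -A), sub_eq_add_neg]
  have hsome : ∀ i, ∫ ω, |β * Y i ω| ^ (r i) ∂ℙ = β ^ (r i) * Real.Gamma (1 + r i) := by
    intro i
    have hsm : AEStronglyMeasurable (fun x : ℝ => |β * x| ^ (r i)) (Measure.map (Y i) ℙ) :=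
      (by fun_prop : Measurable fun x : ℝ => |β * x| ^ (r i)).aestronglyMeasurable
    rw [show (∫ ω, |β * Y i ω| ^ (r i) ∂ℙ) = ∫ x, |β * x| ^ (r i) ∂(Measure.map (Y i) ℙ) from
      (integral_map (hY i).aemeasurable hsm).symm, hlawY i]
    have : ∫ x, |β * x| ^ (r i) ∂(gammaMeasure 1 1) =
        ∫ x, β ^ (r i) * x ^ (r i) ∂(gammaMeasure 1 1) := by
      refine integral_congr_ae ?_
      filter_upwards [my_gammaMeasure_ae_pos 1 1] with x hx
      rw [abs_of_pos (mul_pos hβ hx), Real.mul_rpow hβ.le hx.le]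
    rw [this, integral_const_mul, my_gamma_moment one_pos (by linarith [hr i] : (0:ℝ) < 1 + r i),
      Real.Gamma_one, div_one]
  rw [key, my_integral_prod_indep g hgmeas hgnn hindg Finset.univ]
  rw [show (∏ o : Option (Fin n), ∫ ω, g o ω ∂ℙ) =
      (∫ ω, g none ω ∂ℙ) * ∏ i, ∫ ω, g (some i) ω ∂ℙ from
    Fintype.prod_option fun o => ∫ ω, g o ω ∂ℙ]
  simp only [hg_def, Option.elim]
  rw [hnone]
  congr 1
  exact Finset.prod_congr rfl fun i _ => hsome i
end

section
/- Let X ~ B2(p, q, β) and let x_u = VaR[X; u] for u ∈ (0,1). For 0 < r < q, the conditional tail moment satisfies E[X^r | X > x_u] = (β^r Γ(p+r) Γ(q−r)) / ((1−u) Γ(p) Γ(q)) · (1 − IB((x_u/β)/(1+x_u/β); p+r, q−r)). -/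
open MeasureTheory ProbabilityTheory Real

open scoped ENNReal NNReal

lemma beta_cast_aux {a b : ℝ} (t : ℝ) (ht : t ∈ Set.Ioc (0:ℝ) 1) :
    ((t ^ (a-1) * (1-t) ^ (b-1) : ℝ) : ℂ) = (t:ℂ) ^ ((a:ℂ)-1) * ((1:ℂ)-(t:ℂ)) ^ ((b:ℂ)-1) := by
  have h1 : (0:ℝ) ≤ t := ht.1.le
  have h2 : (0:ℝ) ≤ 1 - t := by linarith [ht.2]
  rw [Complex.ofReal_mul, Complex.ofReal_cpow h1, Complex.ofReal_cpow h2]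
  push_cast
  ring

lemma beta_integrableOn {a b : ℝ} (ha : 0 < a) (hb : 0 < b) :
    IntegrableOn (fun t : ℝ => t ^ (a-1) * (1-t) ^ (b-1)) (Set.Ioc 0 1) := by
  have hc : IntervalIntegrable (fun x : ℝ => (x:ℂ) ^ ((a:ℂ)-1) * ((1:ℂ)-(x:ℂ)) ^ ((b:ℂ)-1))
      volume 0 1 := Complex.betaIntegral_convergent (by simpa using ha) (by simpa using hb)
  have hIoc : IntegrableOn (fun x : ℝ => (x:ℂ) ^ ((a:ℂ)-1) * ((1:ℂ)-(x:ℂ)) ^ ((b:ℂ)-1))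
      (Set.Ioc 0 1) := hc.1
  have hre : IntegrableOn
      (fun x : ℝ => ((x:ℂ) ^ ((a:ℂ)-1) * ((1:ℂ)-(x:ℂ)) ^ ((b:ℂ)-1)).re) (Set.Ioc 0 1) := hIoc.re
  refine hre.congr_fun (fun t ht => ?_) measurableSet_Ioc
  beta_reduce
  rw [← beta_cast_aux t ht]
  simp

lemma beta_integral_eval {a b : ℝ} (ha : 0 < a) (hb : 0 < b) :
    ∫ t in (0:ℝ)..1, t ^ (a-1) * (1-t) ^ (b-1)
      = Real.Gamma a * Real.Gamma b / Real.Gamma (a+b) := by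
  have hΓ : (0:ℝ) < Real.Gamma (a+b) := Real.Gamma_pos_of_pos (by linarith)
  have hc := Complex.Gamma_mul_Gamma_eq_betaIntegral (s := (a:ℂ)) (t := (b:ℂ))
    (by simpa using ha) (by simpa using hb)
  have hcast : Complex.betaIntegral (a:ℂ) (b:ℂ)
      = ((∫ t in (0:ℝ)..1, t ^ (a-1) * (1-t) ^ (b-1) : ℝ) : ℂ) := by
    rw [Complex.betaIntegral, ← intervalIntegral.integral_ofReal]
    rw [intervalIntegral.integral_of_le (by norm_num), intervalIntegral.integral_of_le (by norm_num)]
    refine setIntegral_congr_fun measurableSet_Ioc (fun t ht => ?_)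
    exact (beta_cast_aux t ht).symm
  rw [hcast] at hc
  rw [Complex.Gamma_ofReal, Complex.Gamma_ofReal, ← Complex.ofReal_add, Complex.Gamma_ofReal] at hc
  have : (Real.Gamma a * Real.Gamma b : ℝ) = Real.Gamma (a+b) * ∫ t in (0:ℝ)..1, t ^ (a-1) * (1-t) ^ (b-1) := by
    exact_mod_cast hc
  field_simp
  linarith [this]



set_option maxHeartbeats 1600000 in
/-- conditional tail moments of `X ~ B2(p,q,β)`: with `x_u = VaR[X;u]`
and `0 < r < q`,
`E[X^r | X > x_u] = β^r Γ(p+r) Γ(q−r)/((1−u)Γ(p)Γ(q)) (1 − IB((x_u/β)/(1+x_u/β); p+r, q−r))`. -/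
theorem beta2_conditional_tail_moment
    {Ω : Type*} [MeasureSpace Ω] [IsProbabilityMeasure (ℙ : Measure Ω)]
    (X : Ω → ℝ) (p q β : ℝ) (hp : 0 < p) (hq : 0 < q) (hβ : 0 < β)
    (hlaw : Measure.map X ℙ =
      volume.withDensity (fun x =>
        ENNReal.ofReal (if 0 < x then
          x ^ (p - 1) /
            (β ^ p * (Real.Gamma p * Real.Gamma q / Real.Gamma (p + q)) *
              (1 + x / β) ^ (p + q))
        else 0)))
    (u : ℝ) (hu : u ∈ Set.Ioo (0 : ℝ) 1)
    (xu : ℝ) (hxu : xu = sInf {x : ℝ | u ≤ (ℙ {ω | X ω ≤ x}).toReal})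
    (r : ℝ) (hr : 0 < r) (hrq : r < q) :
    (∫ ω in {ω | xu < X ω}, X ω ^ r ∂ℙ) / (ℙ {ω | xu < X ω}).toReal =
      β ^ r * Real.Gamma (p + r) * Real.Gamma (q - r) /
        ((1 - u) * Real.Gamma p * Real.Gamma q) *
        (1 - (∫ t in Set.Ioo (0 : ℝ) ((xu / β) / (1 + xu / β)),
                t ^ (p + r - 1) * (1 - t) ^ (q - r - 1)) /
              (Real.Gamma (p + r) * Real.Gamma (q - r) / Real.Gamma (p + q))) := by
  have hΓp : 0 < Real.Gamma p := Real.Gamma_pos_of_pos hp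
  have hΓq : 0 < Real.Gamma q := Real.Gamma_pos_of_pos hq
  have hΓpq : 0 < Real.Gamma (p+q) := Real.Gamma_pos_of_pos (by linarith)
  have hΓpr : 0 < Real.Gamma (p+r) := Real.Gamma_pos_of_pos (by linarith)
  have hΓqr : 0 < Real.Gamma (q-r) := Real.Gamma_pos_of_pos (by linarith)
  set B : ℝ := Real.Gamma p * Real.Gamma q / Real.Gamma (p+q) with hB_def
  have hB : 0 < B := by positivity
  set fR : ℝ → ℝ := fun x => if 0 < x then x ^ (p-1) / (β^p * B * (1+x/β)^(p+q)) else 0 with hfR_def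
  have hfR_nonneg : ∀ x, 0 ≤ fR x := by
    intro x
    simp only [hfR_def]
    split_ifs with h
    · positivity
    · exact le_refl 0
  have hfR_pos : ∀ x, 0 < x → 0 < fR x := by
    intro x hx
    have h1 : 0 < 1 + x/β := by positivity
    simp only [hfR_def, if_pos hx]
    positivity
  have hfR_meas : Measurable fR := by
    apply Measurable.ite (measurableSet_lt measurable_const measurable_id) <;> fun_prop
  set fE : ℝ → ℝ≥0∞ := fun x => ENNReal.ofReal (fR x) with hfE_def
  have hfE_meas : Measurable fE := hfR_meas.ennreal_ofReal
  set μ : Measure ℝ := volume.withDensity fE with hμ_def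
  have hlaw' : Measure.map X ℙ = μ := hlaw
  have hμ_ne : μ ≠ 0 := by
    intro h0
    have h1 : μ (Set.Ioo 1 2) = 0 := by rw [h0]; rfl
    rw [hμ_def, withDensity_apply _ measurableSet_Ioo] at h1
    have h2 : 0 < ∫⁻ x in Set.Ioo (1:ℝ) 2, fE x := by
      rw [lintegral_pos_iff_support (hfE_meas.mono le_rfl le_rfl)]
      have hsub : Set.Ioo (1:ℝ) 2 ⊆ Function.support fE := by
        intro x hx
        simp only [Function.mem_support, hfE_def, ne_eq, ENNReal.ofReal_eq_zero, not_le]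
        exact hfR_pos x (by linarith [hx.1])
      rw [Measure.restrict_apply' measurableSet_Ioo,
        Set.inter_eq_self_of_subset_right hsub]
      simp
    exact h2.ne' h1
  have hX : AEMeasurable X ℙ := by
    by_contra hc
    rw [Measure.map_of_not_aemeasurable hc] at hlaw'
    exact hμ_ne hlaw'.symm
  have hμ_prob : IsProbabilityMeasure μ := by
    rw [← hlaw']
    exact Measure.isProbabilityMeasure_map hX
  have hint : Integrable fR volume := by
    refine ⟨hfR_meas.aestronglyMeasurable, ?_⟩
    rw [HasFiniteIntegral]
    have heq : ∀ x : ℝ, (‖fR x‖₊ : ℝ≥0∞) = fE x := fun x => by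
      rw [hfE_def]; exact Real.enorm_eq_ofReal (hfR_nonneg x)
    calc ∫⁻ x, (‖fR x‖₊ : ℝ≥0∞) = ∫⁻ x, fE x := lintegral_congr heq
      _ = μ Set.univ := by
            rw [hμ_def, withDensity_apply _ MeasurableSet.univ, Measure.restrict_univ]
      _ = 1 := measure_univ
      _ < ⊤ := by norm_num
  set F : ℝ → ℝ := fun x => (μ (Set.Iic x)).toReal with hF_def
  have hF_int : ∀ x, F x = ∫ t in Set.Iic x, fR t := by
    intro x
    rw [hF_def]
    simp only
    rw [hμ_def, withDensity_apply _ measurableSet_Iic, hfE_def]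
    rw [← ofReal_integral_eq_lintegral_ofReal hint.restrict
      (Filter.Eventually.of_forall hfR_nonneg)]
    rw [ENNReal.toReal_ofReal (setIntegral_nonneg measurableSet_Iic (fun t _ => hfR_nonneg t))]
  have hF_theorem : ∀ x, (ℙ {ω | X ω ≤ x}).toReal = F x := by
    intro x
    have h1 : {ω | X ω ≤ x} = X ⁻¹' (Set.Iic x) := rfl
    rw [h1, ← Measure.map_apply_of_aemeasurable hX measurableSet_Iic, hlaw']
  have hF_mono : Monotone F := fun a b hab =>
    ENNReal.toReal_mono (measure_ne_top μ _) (measure_mono (Set.Iic_subset_Iic.2 hab))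
  have hF_zero : F 0 = 0 := by
    rw [hF_int 0]
    have heq : Set.EqOn fR (fun _ => (0:ℝ)) (Set.Iic 0) := by
      intro t ht
      simp only [hfR_def]
      rw [if_neg (by simpa using ht)]
    rw [setIntegral_congr_fun measurableSet_Iic heq, integral_zero]
  have hF_cont : Continuous F := by
    have hprim : ∀ x, F x = F 0 + ∫ t in (0:ℝ)..x, fR t := by
      intro x
      rw [hF_int x, hF_int 0]
      have h2 := intervalIntegral.integral_Iic_sub_Iic hint.integrableOn hint.integrableOn
        (μ := volume) (f := fR) (a := (0:ℝ)) (b := x)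
      linarith [h2]
    have hc : Continuous fun x => ∫ t in (0:ℝ)..x, fR t :=
      intervalIntegral.continuous_primitive (fun a b => hint.intervalIntegrable) 0
    have : F = fun x => F 0 + ∫ t in (0:ℝ)..x, fR t := funext hprim
    rw [this]
    exact continuous_const.add hc
  set S : Set ℝ := {x : ℝ | u ≤ F x} with hS_def
  have hxu' : xu = sInf S := by
    rw [hxu]
    congr 1
    ext x
    simp only [hS_def, Set.mem_setOf_eq, hF_theorem x]
  have hS_closed : IsClosed S := isClosed_Ici.preimage hF_cont
  have hS_ne : S.Nonempty := by
    have h1 : Filter.Tendsto (fun x : ℝ => μ (Set.Iic x)) Filter.atTop (nhds (μ Set.univ)) :=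
      tendsto_measure_Iic_atTop μ
    have h2 : Filter.Tendsto F Filter.atTop (nhds 1) := by
      have h3 := (ENNReal.tendsto_toReal (a := μ Set.univ) (by simp)).comp h1
      simpa [hF_def, measure_univ, Function.comp_def] using h3
    obtain ⟨x, hx⟩ := (h2.eventually (eventually_ge_nhds hu.2)).exists
    exact ⟨x, hx⟩
  obtain ⟨δ, hδ_pos, hδ_lt⟩ : ∃ δ > (0:ℝ), F δ < u := by
    have hc : Filter.Tendsto F (nhds 0) (nhds 0) := by
      have h4 : Filter.Tendsto F (nhds 0) (nhds (F 0)) := hF_cont.continuousAt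
      rwa [hF_zero] at h4
    obtain ⟨ε, hε, hball⟩ := Metric.eventually_nhds_iff.mp (hc.eventually (eventually_lt_nhds hu.1))
    refine ⟨ε/2, by positivity, hball ?_⟩
    rw [Real.dist_eq]
    rw [abs_of_pos (by linarith)]
    linarith
  have hS_lb : ∀ x ∈ S, δ ≤ x := by
    intro x hx
    by_contra h
    push_neg at h
    have : F x ≤ F δ := hF_mono h.le
    have hux : u ≤ F x := hx
    linarith
  have hS_bdd : BddBelow S := ⟨δ, hS_lb⟩
  have hxu_mem : xu ∈ S := by rw [hxu']; exact hS_closed.csInf_mem hS_ne hS_bdd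
  have hxu_pos : 0 < xu := by
    have : δ ≤ xu := by rw [hxu']; exact le_csInf hS_ne hS_lb
    linarith
  have hFxu : F xu = u := by
    refine le_antisymm ?_ hxu_mem
    by_contra h
    push_neg at h
    have hc : Filter.Tendsto F (nhds xu) (nhds (F xu)) := hF_cont.continuousAt
    obtain ⟨ε, hε, hball⟩ := Metric.eventually_nhds_iff.mp (hc.eventually (eventually_gt_nhds h))
    have hy : xu - ε/2 ∈ S := by
      refine le_of_lt (hball ?_)
      rw [Real.dist_eq]
      rw [show xu - ε/2 - xu = -(ε/2) by ring, abs_neg, abs_of_pos (by linarith)]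
      linarith
    have h5 : sInf S ≤ xu - ε/2 := csInf_le hS_bdd hy
    rw [← hxu'] at h5
    linarith
  have htail : (ℙ {ω | xu < X ω}).toReal = 1 - u := by
    have h1 : {ω | xu < X ω} = X ⁻¹' (Set.Ioi xu) := rfl
    rw [h1, ← Measure.map_apply_of_aemeasurable hX measurableSet_Ioi, hlaw']
    have h2 : μ (Set.Ioi xu) = 1 - μ (Set.Iic xu) := by
      rw [← Set.compl_Iic, measure_compl measurableSet_Iic (measure_ne_top μ _), measure_univ]
    rw [h2, ENNReal.toReal_sub_of_le prob_le_one (by norm_num)]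
    have : (μ (Set.Iic xu)).toReal = u := by rw [← hFxu]
    rw [this]
    simp
  have hnum : (∫ ω in {ω | xu < X ω}, X ω ^ r ∂ℙ) = ∫ x in Set.Ioi xu, fR x * x ^ r := by
    have hmeas : AEStronglyMeasurable (fun y : ℝ => y ^ r) (Measure.map X ℙ) :=
      (measurable_id.pow_const r).aestronglyMeasurable
    have h1 : {ω | xu < X ω} = X ⁻¹' (Set.Ioi xu) := rfl
    rw [h1, ← setIntegral_map measurableSet_Ioi hmeas hX, hlaw', hμ_def]
    have hfE' : fE = fun x => ((Real.toNNReal (fR x) : ℝ≥0) : ℝ≥0∞) := rfl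
    rw [hfE', setIntegral_withDensity_eq_setIntegral_smul
      (f := fun x => Real.toNNReal (fR x))
      (measurable_real_toNNReal.comp hfR_meas) _ measurableSet_Ioi]
    refine setIntegral_congr_fun measurableSet_Ioi (fun x hx => ?_)
    simp [NNReal.smul_def, Real.coe_toNNReal _ (hfR_nonneg x)]
  set φ : ℝ → ℝ := fun x => x / (β + x) with hφ_def
  set z : ℝ := xu / (β + xu) with hz_def
  have hβxu : 0 < β + xu := by linarith
  have hz_eq : (xu / β) / (1 + xu / β) = z := by
    rw [hz_def, div_div]
    congr 1
    field_simp
  have hz_mem : z ∈ Set.Ioo (0:ℝ) 1 := by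
    constructor
    · rw [hz_def]; positivity
    · rw [hz_def, div_lt_one hβxu]; linarith
  have hφ_lt : ∀ a b : ℝ, 0 ≤ a → a < b → φ a < φ b := by
    intro a b ha hab
    rw [hφ_def]
    simp only
    rw [div_lt_div_iff₀ (by linarith) (by linarith)]
    nlinarith
  have hφ_le : ∀ a b : ℝ, 0 ≤ a → a ≤ b → φ a ≤ φ b := by
    intro a b ha hab
    rcases eq_or_lt_of_le hab with rfl | h
    · exact le_rfl
    · exact (hφ_lt a b ha h).le
  have hφxu : φ xu = z := rfl
  have h_img : φ '' Set.Ioi xu = Set.Ioo z 1 := by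
    ext t
    constructor
    · rintro ⟨x, hx, rfl⟩
      rw [Set.mem_Ioi] at hx
      have hx0 : 0 < x := lt_trans hxu_pos hx
      refine ⟨hφxu ▸ hφ_lt xu x hxu_pos.le hx, ?_⟩
      rw [hφ_def]
      simp only
      rw [div_lt_one (by linarith)]
      linarith
    · rintro ⟨ht1, ht2⟩
      have ht0 : 0 < t := lt_trans hz_mem.1 ht1
      have h1t : 0 < 1 - t := by linarith
      have hφx : φ (β * t / (1 - t)) = t := by
        have hden : β + β * t / (1 - t) = β / (1 - t) := by
          field_simp [h1t.ne']
          ring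
        rw [hφ_def]
        simp only
        rw [hden]
        rw [div_div_div_eq]
        field_simp
      refine ⟨β * t / (1 - t), ?_, hφx⟩
      rw [Set.mem_Ioi]
      by_contra h
      push_neg at h
      have hx0 : 0 < β * t / (1 - t) := by positivity
      have : φ (β * t / (1 - t)) ≤ φ xu := hφ_le _ _ hx0.le h
      rw [hφx, hφxu] at this
      linarith
  have h_deriv : ∀ x ∈ Set.Ioi xu, HasDerivWithinAt φ (β / (β + x)^2) (Set.Ioi xu) x := by
    intro x hx
    rw [Set.mem_Ioi] at hx
    have hx0 : 0 < x := lt_trans hxu_pos hx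
    have hne : β + x ≠ 0 := by positivity
    have h1 : HasDerivAt (fun y : ℝ => y / (β + y)) ((1 * (β + x) - x * (0 + 1)) / (β + x)^2) x :=
      (hasDerivAt_id x).div ((hasDerivAt_const x β).add (hasDerivAt_id x)) hne
    have h2 : (1 * (β + x) - x * (0 + 1)) / (β + x)^2 = β / (β + x)^2 := by ring_nf
    rw [h2] at h1
    exact h1.hasDerivWithinAt
  have h_inj : Set.InjOn φ (Set.Ioi xu) := by
    intro a ha b hb hab
    rw [Set.mem_Ioi] at ha hb
    by_contra hne
    rcases lt_or_gt_of_ne hne with h | h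
    · exact absurd hab (ne_of_lt (hφ_lt a b (lt_trans hxu_pos ha).le h))
    · exact absurd hab.symm (ne_of_lt (hφ_lt b a (lt_trans hxu_pos hb).le h))
  set g : ℝ → ℝ := fun t => t ^ (p+r-1) * (1-t) ^ (q-r-1) with hg_def
  have h_cov : ∫ t in Set.Ioo z 1, g t
      = ∫ x in Set.Ioi xu, |β / (β + x)^2| • g (φ x) := by
    rw [← h_img]
    exact integral_image_eq_integral_abs_deriv_smul measurableSet_Ioi h_deriv h_inj g
  have h_pt : ∀ x ∈ Set.Ioi xu, |β / (β + x)^2| • g (φ x) = (B / β ^ r) * (fR x * x ^ r) := by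
    intro x hx
    rw [Set.mem_Ioi] at hx
    have hx0 : 0 < x := lt_trans hxu_pos hx
    have hc : 0 < β + x := by linarith
    have h1φ : 1 - φ x = β / (β + x) := by
      rw [hφ_def]
      field_simp
      ring
    have hφx' : φ x = x / (β + x) := rfl
    rw [smul_eq_mul, hg_def]
    simp only
    rw [hφx', h1φ, hfR_def]
    simp only [if_pos hx0]
    rw [abs_of_pos (by positivity)]
    rw [Real.div_rpow hx0.le hc.le, Real.div_rpow hβ.le hc.le]
    have h1xβ : 1 + x/β = (β+x)/β := by field_simp
    rw [h1xβ, Real.div_rpow hc.le hβ.le]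
    have e1 : (β+x)^(p+r-1) * (β+x)^(q-r-1) * (β+x)^(2:ℕ) = (β+x)^(p+q) := by
      rw [← Real.rpow_natCast (β+x) 2, ← Real.rpow_add hc, ← Real.rpow_add hc]
      congr 1
      push_cast
      ring
    have e2 : x^(p-1) * x^r = x^(p+r-1) := by
      rw [← Real.rpow_add hx0]
      congr 1
      ring
    have e3 : β^(q-r-1) * β * (β^r * β^p) = β^(p+q) := by
      have h4 : β^(q-r-1) * β = β^(q-r) := by
        rw [← Real.rpow_add_one hβ.ne']
        congr 1
        ring
      rw [mul_comm (β^(q-r-1)) β, mul_comm β (β^(q-r-1))]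
      rw [h4, ← Real.rpow_add hβ, ← Real.rpow_add hβ]
      congr 1
      ring
    have hβp : (0:ℝ) < β ^ p := Real.rpow_pos_of_pos hβ p
    have hβr : (0:ℝ) < β ^ r := Real.rpow_pos_of_pos hβ r
    have hcpq : (0:ℝ) < (β+x) ^ (p+q) := Real.rpow_pos_of_pos hc _
    have hcpr : (0:ℝ) < (β+x) ^ (p+r-1) := Real.rpow_pos_of_pos hc _
    have hcqr : (0:ℝ) < (β+x) ^ (q-r-1) := Real.rpow_pos_of_pos hc _
    have hβpq : (0:ℝ) < β ^ (p+q) := Real.rpow_pos_of_pos hβ _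
    have hc2 : (0:ℝ) < (β+x)^(2:ℕ) := by positivity
    field_simp
    rw [← e1, ← e2, ← e3]
    ring
  have h_change : ∫ x in Set.Ioi xu, fR x * x ^ r = (β ^ r / B) * ∫ t in Set.Ioo z 1, g t := by
    rw [h_cov, setIntegral_congr_fun measurableSet_Ioi h_pt, integral_const_mul]
    have hβr : (0:ℝ) < β ^ r := Real.rpow_pos_of_pos hβ r
    field_simp
  have hpr : (0:ℝ) < p + r := by linarith
  have hqr : (0:ℝ) < q - r := by linarith
  have hIoc_int : IntegrableOn g (Set.Ioc 0 1) := beta_integrableOn hpr hqr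
  have hB' : ∫ t in (0:ℝ)..1, g t
      = Real.Gamma (p+r) * Real.Gamma (q-r) / Real.Gamma (p+q) := by
    have h6 := beta_integral_eval hpr hqr
    rw [show p + r + (q - r) = p + q by ring] at h6
    exact h6
  have hsplit : ∫ t in Set.Ioo z 1, g t
      = Real.Gamma (p+r) * Real.Gamma (q-r) / Real.Gamma (p+q) - ∫ t in Set.Ioo 0 z, g t := by
    have h1 : IntervalIntegrable g volume 0 z := by
      rw [intervalIntegrable_iff_integrableOn_Ioc_of_le hz_mem.1.le]
      exact hIoc_int.mono_set (Set.Ioc_subset_Ioc le_rfl hz_mem.2.le)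
    have h2 : IntervalIntegrable g volume z 1 := by
      rw [intervalIntegrable_iff_integrableOn_Ioc_of_le hz_mem.2.le]
      exact hIoc_int.mono_set (Set.Ioc_subset_Ioc hz_mem.1.le le_rfl)
    have hadd := intervalIntegral.integral_add_adjacent_intervals h1 h2
    have e1 : ∫ t in Set.Ioo z 1, g t = ∫ t in z..1, g t := by
      rw [intervalIntegral.integral_of_le hz_mem.2.le, integral_Ioc_eq_integral_Ioo]
    have e2 : ∫ t in Set.Ioo 0 z, g t = ∫ t in (0:ℝ)..z, g t := by
      rw [intervalIntegral.integral_of_le hz_mem.1.le, integral_Ioc_eq_integral_Ioo]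
    rw [e1, e2, ← hB', ← hadd]
    ring
  rw [hnum, htail, h_change, hz_eq, hsplit]
  have hβr : (0:ℝ) < β ^ r := Real.rpow_pos_of_pos hβ r
  have h1u : (0:ℝ) < 1 - u := by linarith [hu.2]
  rw [hB_def]
  field_simp
end

section
/- Let N be Poisson with parameter λ > 0, independent of a sequence of dependent Pareto claims (X₁,…,Xₙ,…) from the multivariate Pareto model with parameters α, β > 0 (so X₁+⋯+Xₙ ~ B2(n, α, β)). Then for x > 0 the density of S_N = X₁+⋯+X_N is f(x) = (α λ e^{−λ} / (β(1+x/β)^{α+1})) · ₁F₁(1+α; 2; λ(x/β)/(1+x/β)), and P(S_N = 0) = e^{−λ}. -/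
open MeasureTheory ProbabilityTheory Real

/-- The Kummer confluent hypergeometric function `₁F₁(a;b;z) = Σ (a)ₙ zⁿ/((b)ₙ n!)`,
with `(a)ₙ` the rising Pochhammer symbol. -/
noncomputable def kummer1F1 (a b z : ℝ) : ℝ :=
  ∑' n : ℕ, ((∏ k ∈ Finset.range n, (a + k)) / (∏ k ∈ Finset.range n, (b + k))) *
    z ^ n / n.factorial

lemma gamma_prod (α : ℝ) (hα : 0 < α) (m : ℕ) :
    Real.Gamma (α + m) = (∏ k ∈ Finset.range m, (α + k)) * Real.Gamma α := by
  induction m with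
  | zero => simp
  | succ n ih =>
    have h1 : α + (n + 1 : ℕ) = (α + n) + 1 := by push_cast; ring
    rw [h1, Real.Gamma_add_one (by positivity), ih, Finset.prod_range_succ]
    ring

lemma prod_two_add (m : ℕ) :
    ∏ k ∈ Finset.range m, ((2:ℝ) + k) = (m + 1).factorial := by
  induction m with
  | zero => simp
  | succ n ih =>
    rw [Finset.prod_range_succ, ih, Nat.factorial_succ (n+1)]
    push_cast; ring

lemma kummer_summable (α z : ℝ) (hα : 0 < α) (hz : 0 ≤ z) :
    Summable (fun m : ℕ =>
      ((∏ k ∈ Finset.range m, (1 + α + (k:ℝ))) / (∏ k ∈ Finset.range m, ((2:ℝ) + k))) *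
        z ^ m / m.factorial) := by
  refine Summable.of_nonneg_of_le (fun m => by positivity) (fun m => ?_)
    (Real.summable_pow_div_factorial ((1 + α) * z))
  have hprodle : (∏ k ∈ Finset.range m, (1 + α + (k:ℝ))) ≤
      (1 + α) ^ m * ∏ k ∈ Finset.range m, ((2:ℝ) + k) := by
    calc (∏ k ∈ Finset.range m, (1 + α + (k:ℝ)))
        ≤ ∏ k ∈ Finset.range m, ((1 + α) * ((2:ℝ) + k)) := by
          refine Finset.prod_le_prod (fun k _ => by positivity) (fun k _ => ?_)
          have : (0:ℝ) ≤ (k:ℝ) := Nat.cast_nonneg k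
          nlinarith [hα.le]
      _ = (1 + α) ^ m * ∏ k ∈ Finset.range m, ((2:ℝ) + k) := by
          rw [Finset.prod_mul_distrib, Finset.prod_const, Finset.card_range]
  have hpos : (0:ℝ) < ∏ k ∈ Finset.range m, ((2:ℝ) + k) := by positivity
  have h1 : (∏ k ∈ Finset.range m, (1 + α + (k:ℝ))) / (∏ k ∈ Finset.range m, ((2:ℝ) + k))
      ≤ (1 + α) ^ m := by
    rw [div_le_iff₀ hpos]; linarith
  calc ((∏ k ∈ Finset.range m, (1 + α + (k:ℝ))) / (∏ k ∈ Finset.range m, ((2:ℝ) + k))) *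
        z ^ m / m.factorial
      ≤ (1 + α) ^ m * z ^ m / m.factorial := by
        apply div_le_div_of_nonneg_right ?_ ?_ |>.trans_eq rfl
        · exact mul_le_mul_of_nonneg_right h1 (by positivity)
        · positivity
    _ = ((1 + α) * z) ^ m / m.factorial := by rw [mul_pow]

lemma term_eq (α β lam x : ℝ) (hα : 0 < α) (hβ : 0 < β) (hx : 0 < x) (m : ℕ) :
    Real.exp (-lam) * lam ^ (m+1) / (m+1).factorial *
      (x ^ ((((m+1:ℕ)) : ℝ) - 1) /
        (β ^ (m+1) * (Real.Gamma ((m+1:ℕ)) * Real.Gamma α / Real.Gamma (((m+1:ℕ)) + α)) *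
          (1 + x / β) ^ ((((m+1:ℕ)):ℝ) + α)))
    = α * lam * Real.exp (-lam) / (β * (1 + x / β) ^ (α + 1)) *
      (((∏ k ∈ Finset.range m, (1 + α + (k:ℝ))) / (∏ k ∈ Finset.range m, ((2:ℝ) + k))) *
        (lam * (x / β) / (1 + x / β)) ^ m / m.factorial) := by
  have hs : (0:ℝ) < 1 + x / β := by positivity
  have hΓα : 0 < Real.Gamma α := Real.Gamma_pos_of_pos hα
  have e1 : ((((m+1:ℕ)) : ℝ) - 1) = (m:ℝ) := by push_cast; ring
  have e2 : ((((m+1:ℕ)) : ℝ) + α) = (m:ℝ) + (α + 1) := by push_cast; ring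
  have hΓ1 : Real.Gamma (((m+1:ℕ)) : ℝ) = m.factorial := by
    push_cast
    exact_mod_cast Real.Gamma_nat_eq_factorial m
  have hΓ2 : Real.Gamma ((((m+1:ℕ)) : ℝ) + α)
      = α * (∏ k ∈ Finset.range m, (1 + α + (k:ℝ))) * Real.Gamma α := by
    have h3 : ((((m+1:ℕ)) : ℝ) + α) = α + ((m+1:ℕ) : ℝ) := by ring
    rw [h3, gamma_prod α hα (m+1), Finset.prod_range_succ']
    simp only [Nat.cast_zero, add_zero]
    congr 1
    · rw [mul_comm]
      congr 1
      refine Finset.prod_congr rfl (fun k _ => ?_)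
      push_cast; ring
  rw [hΓ1, hΓ2, prod_two_add, e1, e2, Real.rpow_natCast, Real.rpow_add hs, Real.rpow_natCast]
  have hfac : ((m:ℕ).factorial : ℝ) ≠ 0 := Nat.cast_ne_zero.mpr (Nat.factorial_ne_zero m)
  have hfac2 : (((m+1:ℕ)).factorial : ℝ) ≠ 0 := Nat.cast_ne_zero.mpr (Nat.factorial_ne_zero _)
  have hP : (0:ℝ) < ∏ k ∈ Finset.range m, (1 + α + (k:ℝ)) := by positivity
  have hspow : (0:ℝ) < (1 + x / β) ^ (α + 1) := Real.rpow_pos_of_pos hs _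
  have hsm : (0:ℝ) < (1 + x / β) ^ m := by positivity
  have hβne : β ≠ 0 := hβ.ne'
  have hxβ : x + β ≠ 0 := by positivity
  field_simp
  have key : β ^ m * (x + β)⁻¹ ^ m * (x * β⁻¹ + β * β⁻¹) ^ m = 1 := by
    rw [← mul_pow, ← mul_pow, ← add_mul]
    rw [show β * (x + β)⁻¹ * ((x + β) * β⁻¹) = 1 by field_simp]
    simp
  linear_combination (-(lam * lam ^ m * x ^ m * β)) * key

lemma key_tsum (α β lam x : ℝ) (hα : 0 < α) (hβ : 0 < β) (hlam : 0 < lam) (hx : 0 < x) :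
    (∑' m : ℕ, ENNReal.ofReal (Real.exp (-lam) * lam ^ (m+1) / (m+1).factorial) *
      ENNReal.ofReal (x ^ ((((m+1:ℕ)) : ℝ) - 1) /
        (β ^ (m+1) * (Real.Gamma ((m+1:ℕ)) * Real.Gamma α / Real.Gamma (((m+1:ℕ)) + α)) *
          (1 + x / β) ^ ((((m+1:ℕ)):ℝ) + α))))
    = ENNReal.ofReal (α * lam * Real.exp (-lam) / (β * (1 + x / β) ^ (α + 1)) *
        kummer1F1 (1 + α) 2 (lam * (x / β) / (1 + x / β))) := by
  set z : ℝ := lam * (x / β) / (1 + x / β) with hz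
  have hs : (0:ℝ) < 1 + x / β := by positivity
  have hz0 : 0 ≤ z := by positivity
  set C : ℝ := α * lam * Real.exp (-lam) / (β * (1 + x / β) ^ (α + 1)) with hC
  have hC0 : 0 ≤ C := by positivity
  have hterm : ∀ m : ℕ,
      ENNReal.ofReal (Real.exp (-lam) * lam ^ (m+1) / (m+1).factorial) *
        ENNReal.ofReal (x ^ ((((m+1:ℕ)) : ℝ) - 1) /
          (β ^ (m+1) * (Real.Gamma ((m+1:ℕ)) * Real.Gamma α / Real.Gamma (((m+1:ℕ)) + α)) *
            (1 + x / β) ^ ((((m+1:ℕ)):ℝ) + α)))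
      = ENNReal.ofReal C *
        ENNReal.ofReal (((∏ k ∈ Finset.range m, (1 + α + (k:ℝ))) /
          (∏ k ∈ Finset.range m, ((2:ℝ) + k))) * z ^ m / m.factorial) := by
    intro m
    rw [← ENNReal.ofReal_mul (by positivity), ← ENNReal.ofReal_mul hC0,
      term_eq α β lam x hα hβ hx m]
  rw [tsum_congr hterm, ENNReal.tsum_mul_left]
  rw [← ENNReal.ofReal_tsum_of_nonneg (fun m => by positivity) (kummer_summable α z hα hz0)]
  rw [← ENNReal.ofReal_mul hC0]
  congr 1


set_option maxHeartbeats 1000000 in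
/-- compound Pareto-Poisson model. If `N ~ Poisson(λ)` is independent of
dependent Pareto claims whose `n`-fold sums are `B2(n,α,β)`, then `S_N` has an atom
`e^{-λ}` at `0` and density
`α λ e^{-λ}/(β(1+x/β)^(α+1)) ₁F₁(1+α;2;λ(x/β)/(1+x/β))` on `(0,∞)`. -/
theorem compound_pareto_poisson_density
    {Ω : Type*} [MeasureSpace Ω] [IsProbabilityMeasure (ℙ : Measure Ω)]
    (X : ℕ → Ω → ℝ) (hX : ∀ n, Measurable (X n))
    (N : Ω → ℕ) (hN : Measurable N)
    (hind : IndepFun N (fun ω => fun n => X n ω) ℙ)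
    (α β lam : ℝ) (hα : 0 < α) (hβ : 0 < β) (hlam : 0 < lam)
    (hlawN : ∀ n : ℕ, ℙ {ω | N ω = n} =
      ENNReal.ofReal (Real.exp (-lam) * lam ^ n / n.factorial))
    (hsum : ∀ n : ℕ, 1 ≤ n →
      Measure.map (fun ω => ∑ i ∈ Finset.range n, X i ω) ℙ =
        volume.withDensity (fun x =>
          ENNReal.ofReal (if 0 < x then
            x ^ ((n : ℝ) - 1) /
              (β ^ n * (Real.Gamma n * Real.Gamma α / Real.Gamma (n + α)) *
                (1 + x / β) ^ ((n : ℝ) + α))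
          else 0))) :
    Measure.map (fun ω => ∑ i ∈ Finset.range (N ω), X i ω) ℙ =
      ENNReal.ofReal (Real.exp (-lam)) • Measure.dirac (0 : ℝ) +
        volume.withDensity (fun x =>
          ENNReal.ofReal (if 0 < x then
            α * lam * Real.exp (-lam) / (β * (1 + x / β) ^ (α + 1)) *
              kummer1F1 (1 + α) 2 (lam * (x / β) / (1 + x / β))
          else 0)) := by
  -- notation
  set Sn : ℕ → Ω → ℝ := fun n ω => ∑ i ∈ Finset.range n, X i ω with hSndef
  have hSn_meas : ∀ n, Measurable (Sn n) :=
    fun n => Finset.measurable_sum (Finset.range n) (fun i _ => hX i)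
  have hdecomp : ∀ t : Set ℝ, (fun ω => ∑ i ∈ Finset.range (N ω), X i ω) ⁻¹' t =
      ⋃ n, ({ω | N ω = n} ∩ Sn n ⁻¹' t) := by
    intro t; ext ω
    simp only [Set.mem_preimage, Set.mem_iUnion, Set.mem_inter_iff, Set.mem_setOf_eq]
    constructor
    · intro h; exact ⟨N ω, rfl, h⟩
    · rintro ⟨n, rfl, h⟩; exact h
  have hNsets : ∀ n : ℕ, MeasurableSet {ω | N ω = n} :=
    fun n => hN (measurableSet_singleton n)
  have hS : Measurable (fun ω => ∑ i ∈ Finset.range (N ω), X i ω) := by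
    intro t ht
    rw [hdecomp]
    exact MeasurableSet.iUnion fun n => (hNsets n).inter ((hSn_meas n) ht)
  have hcomp : ∀ n, IndepFun N (Sn n) ℙ := by
    intro n
    exact hind.comp measurable_id
      (Finset.measurable_sum (Finset.range n) (fun i _ => measurable_pi_apply i))
  -- first decomposition of the law of S_N
  have hmain : Measure.map (fun ω => ∑ i ∈ Finset.range (N ω), X i ω) ℙ =
      ℙ {ω | N ω = 0} • Measure.map (Sn 0) ℙ +
        Measure.sum (fun m => ℙ {ω | N ω = m+1} • Measure.map (Sn (m+1)) ℙ) := by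
    refine Measure.ext fun t ht => ?_
    have hdisj : Pairwise (Function.onFun Disjoint
        (fun n => ({ω | N ω = n} ∩ Sn n ⁻¹' t))) := by
      intro i j hij
      refine Set.disjoint_left.mpr ?_
      rintro ω ⟨hi, -⟩ ⟨hj, -⟩
      exact hij (hi.symm.trans hj)
    have hterm : ∀ n, ℙ ({ω | N ω = n} ∩ Sn n ⁻¹' t) =
        ℙ {ω | N ω = n} * Measure.map (Sn n) ℙ t := by
      intro n
      rw [Measure.map_apply (hSn_meas n) ht]
      exact (hcomp n).measure_inter_preimage_eq_mul {n} t (measurableSet_singleton n) ht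
    rw [Measure.map_apply hS ht, hdecomp, measure_iUnion hdisj
      (fun n => (hNsets n).inter ((hSn_meas n) ht)), tsum_congr hterm,
      tsum_eq_zero_add' ENNReal.summable]
    simp only [Measure.coe_add, Pi.add_apply, Measure.smul_apply, smul_eq_mul,
      Measure.sum_apply _ ht]
  have h0map : Measure.map (Sn 0) ℙ = Measure.dirac (0 : ℝ) := by
    have : Sn 0 = fun _ => (0:ℝ) := by funext ω; simp [hSndef]
    rw [this, Measure.map_const]
    simp
  have h0law : ℙ {ω | N ω = 0} = ENNReal.ofReal (Real.exp (-lam)) := by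
    rw [hlawN 0]; norm_num
  rw [hmain, h0map, h0law]
  congr 1
  -- now the density part
  have hgmeas : ∀ n : ℕ, Measurable (fun x : ℝ =>
      ENNReal.ofReal (if 0 < x then
        x ^ ((n : ℝ) - 1) /
          (β ^ n * (Real.Gamma n * Real.Gamma α / Real.Gamma (n + α)) *
            (1 + x / β) ^ ((n : ℝ) + α))
      else 0)) := by
    intro n
    refine ENNReal.measurable_ofReal.comp (Measurable.ite measurableSet_Ioi ?_ measurable_const)
    fun_prop
  have hdens : (fun x : ℝ =>
      ENNReal.ofReal (if 0 < x then
        α * lam * Real.exp (-lam) / (β * (1 + x / β) ^ (α + 1)) *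
          kummer1F1 (1 + α) 2 (lam * (x / β) / (1 + x / β))
      else 0)) = fun x => ∑' m : ℕ,
        ENNReal.ofReal (Real.exp (-lam) * lam ^ (m+1) / (m+1).factorial) *
        ENNReal.ofReal (if 0 < x then
          x ^ ((((m+1:ℕ)) : ℝ) - 1) /
            (β ^ (m+1) * (Real.Gamma ((m+1:ℕ)) * Real.Gamma α / Real.Gamma (((m+1:ℕ)) + α)) *
              (1 + x / β) ^ ((((m+1:ℕ)):ℝ) + α))
        else 0) := by
    funext x
    by_cases hx : 0 < x
    · simp only [if_pos hx]
      exact (key_tsum α β lam x hα hβ hlam hx).symm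
    · simp [if_neg hx]
  rw [hdens]
  have hmeas2 : ∀ m : ℕ, Measurable (fun x : ℝ =>
      ENNReal.ofReal (Real.exp (-lam) * lam ^ (m+1) / (m+1).factorial) *
      ENNReal.ofReal (if 0 < x then
        x ^ ((((m+1:ℕ)) : ℝ) - 1) /
          (β ^ (m+1) * (Real.Gamma ((m+1:ℕ)) * Real.Gamma α / Real.Gamma (((m+1:ℕ)) + α)) *
            (1 + x / β) ^ ((((m+1:ℕ)):ℝ) + α))
      else 0)) := fun m => (hgmeas (m+1)).const_mul _
  rw [show (fun x : ℝ => ∑' m : ℕ,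
      ENNReal.ofReal (Real.exp (-lam) * lam ^ (m+1) / (m+1).factorial) *
      ENNReal.ofReal (if 0 < x then
        x ^ ((((m+1:ℕ)) : ℝ) - 1) /
          (β ^ (m+1) * (Real.Gamma ((m+1:ℕ)) * Real.Gamma α / Real.Gamma (((m+1:ℕ)) + α)) *
            (1 + x / β) ^ ((((m+1:ℕ)):ℝ) + α))
      else 0)) = ∑' m : ℕ, (fun x : ℝ =>
      ENNReal.ofReal (Real.exp (-lam) * lam ^ (m+1) / (m+1).factorial) *
      ENNReal.ofReal (if 0 < x then
        x ^ ((((m+1:ℕ)) : ℝ) - 1) /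
          (β ^ (m+1) * (Real.Gamma ((m+1:ℕ)) * Real.Gamma α / Real.Gamma (((m+1:ℕ)) + α)) *
            (1 + x / β) ^ ((((m+1:ℕ)):ℝ) + α))
      else 0)) from funext fun x => (ENNReal.tsum_apply (f := fun m x =>
      ENNReal.ofReal (Real.exp (-lam) * lam ^ (m+1) / (m+1).factorial) *
      ENNReal.ofReal (if 0 < x then
        x ^ ((((m+1:ℕ)) : ℝ) - 1) /
          (β ^ (m+1) * (Real.Gamma ((m+1:ℕ)) * Real.Gamma α / Real.Gamma (((m+1:ℕ)) + α)) *
            (1 + x / β) ^ ((((m+1:ℕ)):ℝ) + α))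
      else 0)) (x := x)).symm]
  rw [withDensity_tsum hmeas2]
  congr 1
  funext m
  have hsmul : (fun x : ℝ =>
      ENNReal.ofReal (Real.exp (-lam) * lam ^ (m+1) / (m+1).factorial) *
      ENNReal.ofReal (if 0 < x then
        x ^ ((((m+1:ℕ)) : ℝ) - 1) /
          (β ^ (m+1) * (Real.Gamma ((m+1:ℕ)) * Real.Gamma α / Real.Gamma (((m+1:ℕ)) + α)) *
            (1 + x / β) ^ ((((m+1:ℕ)):ℝ) + α))
      else 0)) = ENNReal.ofReal (Real.exp (-lam) * lam ^ (m+1) / (m+1).factorial) •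
        (fun x : ℝ => ENNReal.ofReal (if 0 < x then
          x ^ ((((m+1:ℕ)) : ℝ) - 1) /
            (β ^ (m+1) * (Real.Gamma ((m+1:ℕ)) * Real.Gamma α / Real.Gamma (((m+1:ℕ)) + α)) *
              (1 + x / β) ^ ((((m+1:ℕ)):ℝ) + α))
        else 0)) := rfl
  rw [hsmul, withDensity_smul _ (hgmeas (m+1)), ← hsum (m+1) (by omega), hlawN (m+1)]
end

section
/- Let N be negative binomial with parameters r > 0 and 0 < p < 1, P(N = n) = (Γ(n+r)/(Γ(n+1)Γ(r))) p^r (1−p)ⁿ, independent of dependent Pareto claims whose n-fold sum is B2(n, α, β). Then for x > 0 the density of S_N is f(x) = (r α (1−p) p^r / (β(1+x/β)^{α+1})) · ₂F₁(1+r, 1+α; 2; (1−p)(x/β)/(1+x/β)), and P(S_N = 0) = p^r. -/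
open MeasureTheory ProbabilityTheory Real Filter

lemma gamma_add_prod (c : ℝ) (hc : 0 < c) (m : ℕ) :
    Real.Gamma (m + c) = Real.Gamma c * ∏ k ∈ Finset.range m, (c + k) := by
  induction m with
  | zero => simp
  | succ m ih =>
    have h1 : ((m + 1 : ℕ) : ℝ) + c = (↑m + c) + 1 := by push_cast; ring
    rw [h1, Real.Gamma_add_one (by positivity), ih, Finset.prod_range_succ]
    ring

lemma prod_two_eq (m : ℕ) : (∏ k ∈ Finset.range m, ((2:ℝ) + k)) = (m + 1).factorial := by
  induction m with
  | zero => simp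
  | succ m ih =>
    rw [Finset.prod_range_succ, ih]
    have : (m + 1 + 1).factorial = (m + 2) * (m + 1).factorial := rfl
    rw [this]
    push_cast
    ring

lemma tendsto_shift_div (c d : ℝ) :
    Tendsto (fun m : ℕ => ((m:ℝ) + c) / ((m:ℝ) + d)) atTop (nhds 1) := by
  have hd : Tendsto (fun m : ℕ => ((m:ℝ) + d)) atTop atTop :=
    tendsto_atTop_add_const_right _ _ tendsto_natCast_atTop_atTop
  have h0 : Tendsto (fun m : ℕ => (c - d) / ((m:ℝ) + d)) atTop (nhds 0) :=
    Tendsto.div_atTop tendsto_const_nhds hd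
  have h1 : Tendsto (fun m : ℕ => 1 + (c - d) / ((m:ℝ) + d)) atTop (nhds 1) := by
    simpa using tendsto_const_nhds.add h0
  refine h1.congr' ?_
  filter_upwards [hd.eventually_gt_atTop 0] with m hm
  field_simp
  ring

lemma summable_gauss_terms (a b z : ℝ) (ha : 0 < a) (hb : 0 < b) (hz : 0 < z) (hz1 : z < 1) :
    Summable (fun n : ℕ => ((∏ k ∈ Finset.range n, (a + k)) * (∏ k ∈ Finset.range n, (b + k)) /
      (∏ k ∈ Finset.range n, ((2:ℝ) + k))) * z ^ n / n.factorial) := by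
  set f : ℕ → ℝ := fun n => ((∏ k ∈ Finset.range n, (a + k)) * (∏ k ∈ Finset.range n, (b + k)) /
      (∏ k ∈ Finset.range n, ((2:ℝ) + k))) * z ^ n / n.factorial with hf
  have hfpos : ∀ n, 0 < f n := by
    intro n
    have h1 : 0 < ∏ k ∈ Finset.range n, (a + k) := Finset.prod_pos fun k _ => by positivity
    have h2 : 0 < ∏ k ∈ Finset.range n, (b + k) := Finset.prod_pos fun k _ => by positivity
    have h3 : 0 < ∏ k ∈ Finset.range n, ((2:ℝ) + k) := Finset.prod_pos fun k _ => by positivity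
    have h4 : (0:ℝ) < n.factorial := by positivity
    positivity
  have hrec : ∀ n : ℕ, f (n + 1) = f n * ((a + n) * (b + n) * z / (((2:ℝ) + n) * (n + 1))) := by
    intro n
    have h3 : (∏ k ∈ Finset.range n, ((2:ℝ) + k)) ≠ 0 :=
      (Finset.prod_pos fun k _ => by positivity).ne'
    have h4 : ((n.factorial : ℝ)) ≠ 0 := by positivity
    rw [hf]
    simp only [Finset.prod_range_succ, pow_succ, Nat.factorial_succ]
    push_cast
    field_simp
  refine summable_of_ratio_test_tendsto_lt_one hz1
    (Filter.Eventually.of_forall fun n => (hfpos n).ne') ?_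
  have heq : ∀ n : ℕ, ‖f (n + 1)‖ / ‖f n‖ =
      z * (((n:ℝ) + a) / ((n:ℝ) + 1)) * (((n:ℝ) + b) / ((n:ℝ) + 2)) := by
    intro n
    rw [Real.norm_eq_abs, Real.norm_eq_abs, abs_of_pos (hfpos (n+1)), abs_of_pos (hfpos n),
      hrec n]
    rw [mul_comm (f n), mul_div_assoc, div_self (hfpos n).ne', mul_one]
    have h2 : ((2:ℝ) + n) ≠ 0 := by positivity
    have h1 : ((n:ℝ) + 1) ≠ 0 := by positivity
    field_simp
    ring
  have : Tendsto (fun n : ℕ => z * (((n:ℝ) + a) / ((n:ℝ) + 1)) * (((n:ℝ) + b) / ((n:ℝ) + 2)))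
      atTop (nhds z) := by
    have := (tendsto_const_nhds (x := z) (f := atTop (α := ℕ))).mul
      (tendsto_shift_div a 1) |>.mul (tendsto_shift_div b 2)
    simpa using this
  exact this.congr fun n => (heq n).symm

lemma term_identity (α β r p x : ℝ) (hα : 0 < α) (hβ : 0 < β) (hr : 0 < r)
    (hp : p ∈ Set.Ioo (0:ℝ) 1) (hx : 0 < x) (m : ℕ) :
    Real.Gamma ((m + 1 : ℕ) + r) / (Real.Gamma ((m + 1 : ℕ) + 1) * Real.Gamma r) * p ^ r *
        (1 - p) ^ (m + 1) *
      (x ^ (((m + 1 : ℕ) : ℝ) - 1) /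
        (β ^ (m + 1) * (Real.Gamma ((m + 1 : ℕ)) * Real.Gamma α / Real.Gamma ((m + 1 : ℕ) + α)) *
          (1 + x / β) ^ (((m + 1 : ℕ) : ℝ) + α))) =
    r * α * (1 - p) * p ^ r / (β * (1 + x / β) ^ (α + 1)) *
      (((∏ k ∈ Finset.range m, (1 + r + k)) * (∏ k ∈ Finset.range m, (1 + α + k)) /
        (∏ k ∈ Finset.range m, ((2:ℝ) + k))) *
        ((1 - p) * (x / β) / (1 + x / β)) ^ m / m.factorial) := by
  obtain ⟨hp0, hp1⟩ := hp
  have hb : (0:ℝ) < 1 + x / β := by positivity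
  have hΓ1 : Real.Gamma (((m + 1 : ℕ) : ℝ) + r) =
      (r * Real.Gamma r) * ∏ k ∈ Finset.range m, (1 + r + k) := by
    rw [show (((m + 1 : ℕ) : ℝ) + r) = (m : ℝ) + (1 + r) by push_cast; ring,
      gamma_add_prod (1 + r) (by positivity), add_comm 1 r, Real.Gamma_add_one hr.ne']
  have hΓ2 : Real.Gamma (((m + 1 : ℕ) : ℝ) + α) =
      (α * Real.Gamma α) * ∏ k ∈ Finset.range m, (1 + α + k) := by
    rw [show (((m + 1 : ℕ) : ℝ) + α) = (m : ℝ) + (1 + α) by push_cast; ring,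
      gamma_add_prod (1 + α) (by positivity), add_comm 1 α, Real.Gamma_add_one hα.ne']
  have hΓ3 : Real.Gamma (((m + 1 : ℕ) : ℝ) + 1) = ((m + 1).factorial : ℝ) :=
    Real.Gamma_nat_eq_factorial (m + 1)
  have hΓ4 : Real.Gamma (((m + 1 : ℕ) : ℝ)) = (m.factorial : ℝ) := by
    rw [show (((m + 1 : ℕ) : ℝ)) = (m : ℝ) + 1 by push_cast; ring]
    exact Real.Gamma_nat_eq_factorial m
  have hx1 : x ^ (((m + 1 : ℕ) : ℝ) - 1) = x ^ m := by
    rw [show (((m + 1 : ℕ) : ℝ) - 1) = (m : ℝ) by push_cast; ring, Real.rpow_natCast]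
  have hpw : (1 + x / β) ^ (((m + 1 : ℕ) : ℝ) + α) =
      (1 + x / β) ^ (α + 1) * (1 + x / β) ^ m := by
    rw [show (((m + 1 : ℕ) : ℝ) + α) = (α + 1) + (m : ℝ) by push_cast; ring,
      Real.rpow_add hb, Real.rpow_natCast]
  have hbb : (1 + x / β) = (β + x) / β := by field_simp
  have h5 : (1 + x / β) ^ m = (β + x) ^ m / β ^ m := by rw [hbb, div_pow]
  have hz : ((1 - p) * (x / β) / (1 + x / β)) ^ m = (1 - p) ^ m * x ^ m / (β + x) ^ m := by
    rw [show (1 - p) * (x / β) / (1 + x / β) = (1 - p) * x / (β + x) by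
      rw [hbb]; field_simp, div_pow, mul_pow]
  rw [hΓ1, hΓ2, hΓ3, hΓ4, hx1, hpw, prod_two_eq, h5, hz]
  have hΓr : Real.Gamma r ≠ 0 := (Real.Gamma_pos_of_pos hr).ne'
  have hΓα : Real.Gamma α ≠ 0 := (Real.Gamma_pos_of_pos hα).ne'
  have hf1 : ((m.factorial : ℝ)) ≠ 0 := by positivity
  have hf2 : (((m + 1).factorial : ℝ)) ≠ 0 := by positivity
  have hpw1 : (1 + x / β) ^ (α + 1) ≠ 0 := (Real.rpow_pos_of_pos hb _).ne'
  have hbm : (1 + x / β) ^ m ≠ 0 := by positivity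
  have hβm : β ^ (m + 1) ≠ 0 := by positivity
  have hβm' : β ^ m ≠ 0 := by positivity
  have hbx : (β + x) ^ m ≠ 0 := by positivity
  field_simp
  ring

lemma measure_sum_shift {α : Type*} [MeasurableSpace α] (f : ℕ → MeasureTheory.Measure α) :
    Measure.sum f = f 0 + Measure.sum (fun n => f (n+1)) := by
  ext s hs
  rw [Measure.sum_apply _ hs, Measure.add_apply, Measure.sum_apply _ hs]
  exact tsum_eq_zero_add' ENNReal.summable

/-- The Gauss hypergeometric function `₂F₁(a,b;c;z) = Σ (a)ₙ(b)ₙ zⁿ/((c)ₙ n!)`,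
with `(a)ₙ` the rising Pochhammer symbol. -/
noncomputable def gauss2F1 (a b c z : ℝ) : ℝ :=
  ∑' n : ℕ, ((∏ k ∈ Finset.range n, (a + k)) * (∏ k ∈ Finset.range n, (b + k)) /
    (∏ k ∈ Finset.range n, (c + k))) * z ^ n / n.factorial

set_option maxHeartbeats 1000000 in
/-- compound Pareto-negative binomial model. If `N` is negative binomial
`(r,p)` independent of dependent Pareto claims whose `n`-fold sums are `B2(n,α,β)`, then
`S_N` has atom `p^r` at `0` and density
`r α (1−p) p^r/(β(1+x/β)^(α+1)) ₂F₁(1+r,1+α;2;(1−p)(x/β)/(1+x/β))` on `(0,∞)`. -/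
theorem compound_pareto_negative_binomial_density
    {Ω : Type*} [MeasureSpace Ω] [IsProbabilityMeasure (ℙ : Measure Ω)]
    (X : ℕ → Ω → ℝ) (hX : ∀ n, Measurable (X n))
    (N : Ω → ℕ) (hN : Measurable N)
    (hind : IndepFun N (fun ω => fun n => X n ω) ℙ)
    (α β r p : ℝ) (hα : 0 < α) (hβ : 0 < β) (hr : 0 < r) (hp : p ∈ Set.Ioo (0 : ℝ) 1)
    (hlawN : ∀ n : ℕ, ℙ {ω | N ω = n} =
      ENNReal.ofReal (Real.Gamma (n + r) / (Real.Gamma (n + 1) * Real.Gamma r) *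
        p ^ r * (1 - p) ^ n))
    (hsum : ∀ n : ℕ, 1 ≤ n →
      Measure.map (fun ω => ∑ i ∈ Finset.range n, X i ω) ℙ =
        volume.withDensity (fun x =>
          ENNReal.ofReal (if 0 < x then
            x ^ ((n : ℝ) - 1) /
              (β ^ n * (Real.Gamma n * Real.Gamma α / Real.Gamma (n + α)) *
                (1 + x / β) ^ ((n : ℝ) + α))
          else 0))) :
    Measure.map (fun ω => ∑ i ∈ Finset.range (N ω), X i ω) ℙ =
      ENNReal.ofReal (p ^ r) • Measure.dirac (0 : ℝ) +
        volume.withDensity (fun x =>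
          ENNReal.ofReal (if 0 < x then
            r * α * (1 - p) * p ^ r / (β * (1 + x / β) ^ (α + 1)) *
              gauss2F1 (1 + r) (1 + α) 2 ((1 - p) * (x / β) / (1 + x / β))
          else 0)) := by
  obtain ⟨hp0, hp1⟩ := hp
  have h1p : (0:ℝ) < 1 - p := by linarith
  have hSmeas : ∀ n : ℕ, Measurable (fun ω => ∑ i ∈ Finset.range n, X i ω) :=
    fun n => Finset.measurable_sum _ fun i _ => hX i
  have hF : Measurable (fun ω => ∑ i ∈ Finset.range (N ω), X i ω) := by
    have h2 : Measurable fun q : Ω × ℕ => ∑ i ∈ Finset.range q.2, X i q.1 :=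
      measurable_from_prod_countable_left fun n => hSmeas n
    exact h2.comp (measurable_id.prodMk hN)
  have hindS : ∀ n : ℕ, IndepFun N (fun ω => ∑ i ∈ Finset.range n, X i ω) ℙ := fun n =>
    hind.comp measurable_id
      (Finset.measurable_sum (Finset.range n) fun i _ => measurable_pi_apply i)
  set D : ℕ → ℝ → ENNReal := fun n x => ENNReal.ofReal (if 0 < x then
      x ^ ((n : ℝ) - 1) / (β ^ n * (Real.Gamma n * Real.Gamma α / Real.Gamma (n + α)) *
        (1 + x / β) ^ ((n : ℝ) + α)) else 0) with hD
  have hDmeas : ∀ n, Measurable (D n) := by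
    intro n
    refine ENNReal.measurable_ofReal.comp (Measurable.ite measurableSet_Ioi ?_ measurable_const)
    fun_prop
  set G : ℕ → ℝ → ENNReal := fun n x => ℙ {ω | N ω = n + 1} * D (n + 1) x with hG
  have hGmeas : ∀ n, Measurable (G n) := fun n => (hDmeas (n+1)).const_mul _
  have hmap : Measure.map (fun ω => ∑ i ∈ Finset.range (N ω), X i ω) ℙ =
      Measure.sum (fun n => ℙ {ω | N ω = n} •
        Measure.map (fun ω => ∑ i ∈ Finset.range n, X i ω) ℙ) := by
    ext s hs
    rw [Measure.map_apply hF hs, Measure.sum_apply _ hs]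
    have hpre : (fun ω => ∑ i ∈ Finset.range (N ω), X i ω) ⁻¹' s =
        ⋃ n, ({ω | N ω = n} ∩ (fun ω => ∑ i ∈ Finset.range n, X i ω) ⁻¹' s) := by
      ext ω
      simp only [Set.mem_preimage, Set.mem_iUnion, Set.mem_inter_iff, Set.mem_setOf_eq]
      exact ⟨fun h => ⟨N ω, rfl, h⟩, fun ⟨n, hn, h⟩ => by subst hn; exact h⟩
    rw [hpre, measure_iUnion ?_ ?_]
    · refine tsum_congr fun n => ?_
      rw [Measure.smul_apply, smul_eq_mul, Measure.map_apply (hSmeas n) hs]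
      have := (hindS n).measure_inter_preimage_eq_mul
        (s := {n}) (t := s) (measurableSet_singleton n) hs
      exact this
    · intro i j hij
      refine Set.disjoint_left.mpr fun ω hωi hωj => hij ?_
      rw [← hωi.1, ← hωj.1]
    · exact fun n => (hN (measurableSet_singleton n)).inter (hSmeas n hs)
  have hμ0 : ℙ {ω | N ω = 0} • Measure.map (fun ω => ∑ i ∈ Finset.range 0, X i ω) ℙ =
      ENNReal.ofReal (p ^ r) • Measure.dirac (0:ℝ) := by
    have hS0 : (fun ω : Ω => ∑ i ∈ Finset.range 0, X i ω) = fun _ => (0:ℝ) := by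
      funext ω; simp
    rw [hS0, Measure.map_const, measure_univ, one_smul, hlawN 0]
    congr 1
    simp only [Nat.cast_zero, zero_add, Real.Gamma_one, one_mul, pow_zero, mul_one]
    rw [div_self (Real.Gamma_pos_of_pos hr).ne', one_mul]
  have hμsucc : ∀ n : ℕ, ℙ {ω | N ω = n + 1} •
      Measure.map (fun ω => ∑ i ∈ Finset.range (n+1), X i ω) ℙ =
      volume.withDensity (G n) := by
    intro n
    rw [hsum (n+1) (by omega), ← withDensity_smul _ (hDmeas (n+1))]
    rfl
  rw [hmap]
  have hsplit : Measure.sum (fun n => ℙ {ω | N ω = n} •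
      Measure.map (fun ω => ∑ i ∈ Finset.range n, X i ω) ℙ) =
      (ℙ {ω | N ω = 0} • Measure.map (fun ω => ∑ i ∈ Finset.range 0, X i ω) ℙ) +
        Measure.sum (fun n => ℙ {ω | N ω = n+1} •
          Measure.map (fun ω => ∑ i ∈ Finset.range (n+1), X i ω) ℙ) :=
    measure_sum_shift _
  rw [hsplit, hμ0]
  congr 1
  have hrw : Measure.sum (fun n => ℙ {ω | N ω = n+1} •
      Measure.map (fun ω => ∑ i ∈ Finset.range (n+1), X i ω) ℙ) =
      Measure.sum (fun n => volume.withDensity (G n)) := by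
    congr 1
    funext n
    exact hμsucc n
  rw [hrw, ← withDensity_tsum hGmeas]
  congr 1
  funext x
  rw [ENNReal.tsum_apply]
  by_cases hx : 0 < x
  · have hbpos : (0:ℝ) < 1 + x / β := by positivity
    set z := (1 - p) * (x / β) / (1 + x / β) with hzdef
    have hz0 : 0 < z := div_pos (mul_pos h1p (div_pos hx hβ)) hbpos
    have hz1 : z < 1 := by
      rw [hzdef, div_lt_one hbpos]
      have hxb : 0 < x / β := div_pos hx hβ
      nlinarith
    set C := r * α * (1 - p) * p ^ r / (β * (1 + x / β) ^ (α + 1)) with hC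
    have hCpos : 0 < C := by
      apply div_pos
      · exact mul_pos (mul_pos (mul_pos hr hα) h1p) (Real.rpow_pos_of_pos hp0 r)
      · exact mul_pos hβ (Real.rpow_pos_of_pos hbpos _)
    set u : ℕ → ℝ := fun m => ((∏ k ∈ Finset.range m, (1 + r + k)) *
        (∏ k ∈ Finset.range m, (1 + α + k)) /
        (∏ k ∈ Finset.range m, ((2:ℝ) + k))) * z ^ m / m.factorial with hu
    have husum : Summable u :=
      summable_gauss_terms (1+r) (1+α) z (by linarith) (by linarith) hz0 hz1
    have hunn : ∀ m, 0 ≤ u m := by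
      intro m
      have h1 : 0 ≤ ∏ k ∈ Finset.range m, (1 + r + (k:ℝ)) :=
        Finset.prod_nonneg fun k _ => by positivity
      have h2 : 0 ≤ ∏ k ∈ Finset.range m, (1 + α + (k:ℝ)) :=
        Finset.prod_nonneg fun k _ => by positivity
      have h3 : 0 ≤ ∏ k ∈ Finset.range m, ((2:ℝ) + k) :=
        Finset.prod_nonneg fun k _ => by positivity
      have h4 : (0:ℝ) ≤ m.factorial := by positivity
      have h5 : (0:ℝ) ≤ z ^ m := pow_nonneg hz0.le m
      rw [hu]
      positivity
    have hterm : ∀ n : ℕ, G n x = ENNReal.ofReal (C * u n) := by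
      intro n
      have hg1 : 0 < Real.Gamma (((n+1 : ℕ) : ℝ) + r) :=
        Real.Gamma_pos_of_pos (add_pos_of_nonneg_of_pos (by positivity) hr)
      have hg2 : 0 < Real.Gamma (((n+1 : ℕ) : ℝ) + 1) :=
        Real.Gamma_pos_of_pos (by positivity)
      have hcnn : 0 ≤ Real.Gamma (((n+1 : ℕ) : ℝ) + r) /
          (Real.Gamma (((n+1 : ℕ) : ℝ) + 1) * Real.Gamma r) * p ^ r * (1 - p) ^ (n+1) :=
        mul_nonneg (mul_nonneg (div_nonneg hg1.le
          (mul_nonneg hg2.le (Real.Gamma_pos_of_pos hr).le))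
          (Real.rpow_nonneg hp0.le r)) (pow_nonneg h1p.le _)
      rw [hG]
      dsimp only
      rw [hlawN (n+1), hD]
      dsimp only
      rw [if_pos hx, ← ENNReal.ofReal_mul hcnn]
      congr 1
      exact term_identity α β r p x hα hβ hr ⟨hp0, hp1⟩ hx n
    rw [tsum_congr hterm,
      ← ENNReal.ofReal_tsum_of_nonneg (fun n => mul_nonneg hCpos.le (hunn n)) (husum.mul_left C),
      if_pos hx, tsum_mul_left]
    rfl
  · simp [hG, hD, hx]
end

section
/- Let N be logarithmic with P(N = n) = −θⁿ/(n log(1−θ)) for n = 1,2,… and θ ∈ (0,1), independent of dependent Pareto claims whose n-fold sum is B2(n, α, β). Then for x > 0 the density of S_N is f(x) = −(1/log(1−θ)) · [ 1/(x(1+(1−θ)x/β)^α) − 1/(x(1+x/β)^α) ]. -/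
open MeasureTheory ProbabilityTheory Real Set
open scoped ENNReal

set_option maxHeartbeats 1000000

set_option linter.unnecessarySimpa false

lemma aux_hasSum_binomial {α t : ℝ} (hα : 0 < α) (ht0 : 0 ≤ t) (ht1 : t < 1) :
    HasSum (fun n : ℕ => Real.Gamma (n + α) / (n.factorial * Real.Gamma α) * t ^ n)
      ((1 - t) ^ (-α)) := by
  set b : ℕ → ℝ := fun n => Real.Gamma (n + α) / (n.factorial * Real.Gamma α) * t ^ n with hb
  have hΓα : 0 < Real.Gamma α := Real.Gamma_pos_of_pos hα
  have hbnn : ∀ n, 0 ≤ b n := by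
    intro n
    have h1 : 0 < Real.Gamma ((n : ℝ) + α) := Real.Gamma_pos_of_pos (by positivity)
    have : (0:ℝ) < n.factorial := by exact_mod_cast n.factorial_pos
    positivity
  have hr : (0:ℝ) < 1 - t := by linarith
  have key : ∑' n, ENNReal.ofReal (b n) = ENNReal.ofReal ((1 - t) ^ (-α)) := by
    have h1 : ∀ n : ℕ, ENNReal.ofReal (b n) = ∫⁻ s in Ioi (0:ℝ),
        ENNReal.ofReal (Real.exp (-s) * s ^ ((n:ℝ) + α - 1) *
          (t ^ n / (n.factorial * Real.Gamma α))) := by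
      intro n
      have hpos : (0:ℝ) < (n:ℝ) + α := by positivity
      have hint : IntegrableOn (fun s : ℝ => Real.exp (-s) * s ^ ((n:ℝ) + α - 1)) (Ioi 0) :=
        Real.GammaIntegral_convergent hpos
      have hint2 : IntegrableOn (fun s : ℝ =>
          Real.exp (-s) * s ^ ((n:ℝ) + α - 1) * (t ^ n / (n.factorial * Real.Gamma α)))
          (Ioi 0) := hint.mul_const _
      rw [← MeasureTheory.ofReal_integral_eq_lintegral_ofReal hint2 ?_]
      · congr 1
        rw [MeasureTheory.integral_mul_const, ← Real.Gamma_eq_integral hpos]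
        rw [hb]
        have : (0:ℝ) < n.factorial := by exact_mod_cast n.factorial_pos
        field_simp
      · filter_upwards [self_mem_ae_restrict (measurableSet_Ioi : MeasurableSet (Ioi (0:ℝ)))]
          with s hs
        have hs0 : (0:ℝ) < s := hs
        have : (0:ℝ) < n.factorial := by exact_mod_cast n.factorial_pos
        have h2 : (0:ℝ) < s ^ ((n:ℝ) + α - 1) := Real.rpow_pos_of_pos hs0 _
        positivity
    calc ∑' n, ENNReal.ofReal (b n)
        = ∑' n : ℕ, ∫⁻ s in Ioi (0:ℝ), ENNReal.ofReal (Real.exp (-s) * s ^ ((n:ℝ) + α - 1) *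
            (t ^ n / (n.factorial * Real.Gamma α))) := tsum_congr h1
      _ = ∫⁻ s in Ioi (0:ℝ), ∑' n : ℕ, ENNReal.ofReal (Real.exp (-s) * s ^ ((n:ℝ) + α - 1) *
            (t ^ n / (n.factorial * Real.Gamma α))) := by
          have hmeas : ∀ n : ℕ, AEMeasurable (fun s : ℝ => ENNReal.ofReal
              (Real.exp (-s) * s ^ ((n:ℝ) + α - 1) * (t ^ n / (n.factorial * Real.Gamma α))))
              (volume.restrict (Ioi (0:ℝ))) := by
            intro n
            refine (Measurable.ennreal_ofReal ?_).aemeasurable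
            fun_prop
          rw [← lintegral_tsum hmeas]
      _ = ∫⁻ s in Ioi (0:ℝ), ENNReal.ofReal
            (s ^ (α - 1) * Real.exp (-((1 - t) * s)) / Real.Gamma α) := by
          refine setLIntegral_congr_fun measurableSet_Ioi ?_
          intro s hs
          have hs0 : (0:ℝ) < s := hs
          have hterm : ∀ n : ℕ, Real.exp (-s) * s ^ ((n:ℝ) + α - 1) *
              (t ^ n / (n.factorial * Real.Gamma α)) =
              (s ^ (α - 1) * Real.exp (-((1 - t) * s)) / Real.Gamma α) *
                (Real.exp (-(t * s)) * ((t * s) ^ n / n.factorial)) := by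
            intro n
            have h1 : s ^ ((n:ℝ) + α - 1) = s ^ (n : ℕ) * s ^ (α - 1) := by
              rw [← Real.rpow_natCast s n, ← Real.rpow_add hs0]
              ring_nf
            have hexp : Real.exp (-((1 - t) * s)) * Real.exp (-(t * s)) = Real.exp (-s) := by
              rw [← Real.exp_add]; congr 1; ring
            rw [h1, mul_pow, ← hexp]
            field_simp
          simp_rw [hterm]
          rw [← ENNReal.ofReal_tsum_of_nonneg ?_ ?_]
          · congr 1
            have hexpsum : ∑' n : ℕ, (t * s) ^ n / n.factorial = Real.exp (t * s) := by
              rw [Real.exp_eq_exp_ℝ, NormedSpace.exp_eq_tsum_div]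
            rw [tsum_mul_left, tsum_mul_left, hexpsum, ← Real.exp_add]
            simp
          · intro n
            have h2 : (0:ℝ) < s ^ (α - 1) := Real.rpow_pos_of_pos hs0 _
            have h3 : (0:ℝ) < n.factorial := by exact_mod_cast n.factorial_pos
            have h4 : (0:ℝ) ≤ t * s := by positivity
            positivity
          · exact ((Real.summable_pow_div_factorial (t * s)).mul_left _).mul_left _
      _ = ENNReal.ofReal ((1 - t) ^ (-α)) := by
          have hint : IntegrableOn (fun s : ℝ => s ^ (α - 1) * Real.exp (-((1 - t) * s)))
              (Ioi 0) := by
            have h := integrableOn_rpow_mul_exp_neg_mul_rpow (p := 1) (s := α - 1) (b := 1 - t)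
              (by linarith) one_pos hr
            have h0 : ∀ x : ℝ, -(1 - t) * x ^ (1:ℝ) = -((1 - t) * x) := fun x => by
              rw [Real.rpow_one]; ring
            simpa only [h0] using h
          rw [← MeasureTheory.ofReal_integral_eq_lintegral_ofReal (hint.div_const _) ?_]
          · congr 1
            rw [MeasureTheory.integral_div]
            rw [Real.integral_rpow_mul_exp_neg_mul_Ioi hα hr]
            rw [mul_div_assoc, div_self hΓα.ne', mul_one, one_div,
              Real.inv_rpow hr.le, ← Real.rpow_neg hr.le]
          · filter_upwards [self_mem_ae_restrict (measurableSet_Ioi : MeasurableSet (Ioi (0:ℝ)))]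
              with s hs
            have hs0 : (0:ℝ) < s := hs
            have h2 : (0:ℝ) < s ^ (α - 1) := Real.rpow_pos_of_pos hs0 _
            positivity
  have hne : ∑' n, ENNReal.ofReal (b n) ≠ ⊤ := by rw [key]; exact ENNReal.ofReal_ne_top
  have hsummable : Summable b := by
    have := ENNReal.summable_toReal hne
    simpa only [ENNReal.toReal_ofReal (hbnn _)] using this
  have htsum : ∑' n, b n = (1 - t) ^ (-α) := by
    have h := congrArg ENNReal.toReal key
    rw [ENNReal.tsum_toReal_eq (fun n => ENNReal.ofReal_ne_top)] at h
    simp only [ENNReal.toReal_ofReal (hbnn _)] at h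
    rwa [ENNReal.toReal_ofReal (Real.rpow_nonneg (le_of_lt hr) _)] at h
  exact htsum ▸ hsummable.hasSum

lemma aux_pointwise {α β θ x : ℝ} (hα : 0 < α) (hβ : 0 < β) (hθ0 : 0 < θ) (hθ1 : θ < 1)
    (hx : 0 < x) :
    HasSum (fun n : ℕ => if n = 0 then 0 else
      -(θ ^ n / (n * Real.log (1 - θ))) *
        (x ^ ((n : ℝ) - 1) /
          (β ^ n * (Real.Gamma n * Real.Gamma α / Real.Gamma (n + α)) *
            (1 + x / β) ^ ((n : ℝ) + α))))
      (-(1 / Real.log (1 - θ)) *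
        (1 / (x * (1 + (1 - θ) * x / β) ^ α) - 1 / (x * (1 + x / β) ^ α))) := by
  have hΓα : 0 < Real.Gamma α := Real.Gamma_pos_of_pos hα
  have hlogneg : Real.log (1 - θ) < 0 := Real.log_neg (by linarith) (by linarith)
  set L : ℝ := -Real.log (1 - θ) with hL
  have hL0 : 0 < L := by simp [hL]; linarith
  have hβx : 0 < β + x := by linarith
  have hx1β : 0 < 1 + x / β := by positivity
  set t : ℝ := θ * x / (β + x) with htdef
  have ht0 : 0 ≤ t := by positivity
  have ht1 : t < 1 := by
    rw [htdef, div_lt_one hβx]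
    nlinarith
  have hr : 0 < 1 - t := by linarith
  set C : ℝ := 1 / (L * x * (1 + x / β) ^ α) with hC
  have hBS := aux_hasSum_binomial hα ht0 ht1
  have hone : HasSum (fun n : ℕ => if n = 0 then (1:ℝ) else 0) 1 := hasSum_ite_eq 0 1
  have h2 := (hBS.sub hone).mul_left C
  have hfun : (fun n : ℕ => if n = 0 then 0 else
      -(θ ^ n / (n * Real.log (1 - θ))) *
        (x ^ ((n : ℝ) - 1) /
          (β ^ n * (Real.Gamma n * Real.Gamma α / Real.Gamma (n + α)) *
            (1 + x / β) ^ ((n : ℝ) + α)))) =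
      (fun n : ℕ => C * (Real.Gamma (n + α) / (n.factorial * Real.Gamma α) * t ^ n -
        if n = 0 then (1:ℝ) else 0)) := by
    funext n
    match n with
    | 0 => simp [Real.Gamma_pos_of_pos hα, ne_of_gt hΓα, div_self]
    | (m + 1 : ℕ) =>
      set n := m + 1
      have hn0 : (n : ℕ) ≠ 0 := Nat.succ_ne_zero m
      simp only [if_neg hn0]
      have hG : 0 < Real.Gamma ((n : ℝ) + α) := Real.Gamma_pos_of_pos (by positivity)
      have hΓn : Real.Gamma (n : ℝ) = m.factorial := by
        have : ((n : ℕ) : ℝ) = (m : ℝ) + 1 := by push_cast [n]; ring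
        rw [this, Real.Gamma_nat_eq_factorial]
      have hfact : ((n : ℕ).factorial : ℝ) = ((n : ℝ)) * m.factorial := by
        show ((m + 1).factorial : ℝ) = _
        rw [Nat.factorial_succ]
        push_cast [n]
        ring
      have hxpow : x ^ ((n : ℝ) - 1) = x ^ (n : ℕ) * x⁻¹ := by
        rw [show ((n : ℝ) - 1) = (n : ℝ) + (-1) by ring, Real.rpow_add hx,
          Real.rpow_natCast, Real.rpow_neg_one]
      have hbpow : (1 + x / β) ^ ((n : ℝ) + α) =
          (1 + x / β) ^ (n : ℕ) * (1 + x / β) ^ α := by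
        rw [Real.rpow_add hx1β, Real.rpow_natCast]
      have htpow : t ^ (n : ℕ) = θ ^ (n:ℕ) * x ^ (n:ℕ) / (β ^ (n:ℕ) * (1 + x / β) ^ (n:ℕ)) := by
        rw [htdef, div_pow, mul_pow, ← mul_pow]
        congr 2
        field_simp
        rw [div_pow]
        field_simp
      have hlog : Real.log (1 - θ) = -L := by rw [hL]; ring
      rw [hxpow, hbpow, htpow, hΓn, hfact, hlog, hC]
      have hmf : (0:ℝ) < m.factorial := by exact_mod_cast m.factorial_pos
      have hnR : (0:ℝ) < (n:ℝ) := by positivity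
      have hp1 : (0:ℝ) < (1 + x/β) ^ (n:ℕ) := by positivity
      have hp2 : (0:ℝ) < (1 + x/β) ^ α := Real.rpow_pos_of_pos hx1β _
      field_simp
      ring
  have hval : C * ((1 - t) ^ (-α) - 1) =
      -(1 / Real.log (1 - θ)) *
        (1 / (x * (1 + (1 - θ) * x / β) ^ α) - 1 / (x * (1 + x / β) ^ α)) := by
    have hprod : (1 + (1 - θ) * x / β) = (1 - t) * (1 + x / β) := by
      rw [htdef]
      field_simp
      ring
    have hp2 : (0:ℝ) < (1 + x/β) ^ α := Real.rpow_pos_of_pos hx1β _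
    have hp3 : (0:ℝ) < (1 - t) ^ α := Real.rpow_pos_of_pos hr _
    have hlog : Real.log (1 - θ) = -L := by rw [hL]; ring
    rw [hprod, Real.mul_rpow hr.le hx1β.le, Real.rpow_neg hr.le, hlog, hC]
    field_simp
  rw [hfun, ← hval]
  exact h2

/-- compound Pareto-logarithmic model. If `P(N = n) = −θⁿ/(n log(1−θ))`
for `n ≥ 1` and `N` is independent of dependent Pareto claims whose `n`-fold sums are
`B2(n,α,β)`, then `S_N` has density
`−(1/log(1−θ)) [1/(x(1+(1−θ)x/β)^α) − 1/(x(1+x/β)^α)]` on `(0,∞)`. -/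
theorem compound_pareto_logarithmic_density
    {Ω : Type*} [MeasureSpace Ω] [IsProbabilityMeasure (ℙ : Measure Ω)]
    (X : ℕ → Ω → ℝ) (hX : ∀ n, Measurable (X n))
    (N : Ω → ℕ) (hN : Measurable N)
    (hind : IndepFun N (fun ω => fun n => X n ω) ℙ)
    (α β θ : ℝ) (hα : 0 < α) (hβ : 0 < β) (hθ : θ ∈ Set.Ioo (0 : ℝ) 1)
    (hlawN0 : ℙ {ω | N ω = 0} = 0)
    (hlawN : ∀ n : ℕ, 1 ≤ n → ℙ {ω | N ω = n} =
      ENNReal.ofReal (-(θ ^ n / (n * Real.log (1 - θ)))))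
    (hsum : ∀ n : ℕ, 1 ≤ n →
      Measure.map (fun ω => ∑ i ∈ Finset.range n, X i ω) ℙ =
        volume.withDensity (fun x =>
          ENNReal.ofReal (if 0 < x then
            x ^ ((n : ℝ) - 1) /
              (β ^ n * (Real.Gamma n * Real.Gamma α / Real.Gamma (n + α)) *
                (1 + x / β) ^ ((n : ℝ) + α))
          else 0))) :
    Measure.map (fun ω => ∑ i ∈ Finset.range (N ω), X i ω) ℙ =
      volume.withDensity (fun x =>
        ENNReal.ofReal (if 0 < x then
          -(1 / Real.log (1 - θ)) *
            (1 / (x * (1 + (1 - θ) * x / β) ^ α) - 1 / (x * (1 + x / β) ^ α))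
        else 0)) := by
  classical
  obtain ⟨hθ0, hθ1⟩ := hθ
  have hlogneg : Real.log (1 - θ) < 0 := Real.log_neg (by linarith) (by linarith)
  -- the partial sums
  set Sn : ℕ → Ω → ℝ := fun n ω => ∑ i ∈ Finset.range n, X i ω with hSndef
  have hSnmeas : ∀ n, Measurable (Sn n) := fun n =>
    Finset.measurable_sum _ (fun i _ => hX i)
  -- preimage decomposition
  have hpre : ∀ A : Set ℝ, (fun ω => ∑ i ∈ Finset.range (N ω), X i ω) ⁻¹' A =
      ⋃ n, ({ω | N ω = n} ∩ Sn n ⁻¹' A) := by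
    intro A
    ext ω
    simp only [Set.mem_preimage, Set.mem_iUnion, Set.mem_inter_iff, Set.mem_setOf_eq]
    constructor
    · intro h; exact ⟨N ω, rfl, h⟩
    · rintro ⟨n, hn, h⟩
      simpa only [Set.mem_preimage, hSndef, hn] using h
  have hS : Measurable (fun ω => ∑ i ∈ Finset.range (N ω), X i ω) := by
    intro A hA
    rw [hpre A]
    exact MeasurableSet.iUnion fun n =>
      (hN (measurableSet_singleton n)).inter (hSnmeas n hA)
  -- independence of N and Sn n
  have hindep : ∀ (n : ℕ) (A : Set ℝ), MeasurableSet A →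
      ℙ ({ω | N ω = n} ∩ Sn n ⁻¹' A) = ℙ {ω | N ω = n} * ℙ (Sn n ⁻¹' A) := by
    intro n A hA
    have hφ : Measurable (fun p : ℕ → ℝ => ∑ i ∈ Finset.range n, p i) :=
      Finset.measurable_sum _ (fun i _ => measurable_pi_apply i)
    have h := (hind.comp measurable_id hφ).measure_inter_preimage_eq_mul
      {n} A (measurableSet_singleton n) hA
    exact h
  -- the n-th density
  set g : ℕ → ℝ → ℝ≥0∞ := fun n x => ENNReal.ofReal (if 0 < x then
      x ^ ((n : ℝ) - 1) /
        (β ^ n * (Real.Gamma n * Real.Gamma α / Real.Gamma (n + α)) *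
          (1 + x / β) ^ ((n : ℝ) + α))
      else 0) with hg
  have hgmeas : ∀ n, Measurable (g n) := by
    intro n
    apply Measurable.ennreal_ofReal
    refine Measurable.ite ?_ ?_ measurable_const
    · exact measurableSet_Ioi
    · fun_prop
  -- the summand measures' densities
  set D : ℕ → ℝ → ℝ≥0∞ := fun n x => if n = 0 then 0 else
    ENNReal.ofReal (-(θ ^ n / (n * Real.log (1 - θ)))) * g n x with hD
  have hDmeas : ∀ n, Measurable (D n) := by
    intro n
    rcases n with _ | m
    · simpa [hD] using measurable_const
    · simp only [hD, if_neg (Nat.succ_ne_zero m)]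
      exact (hgmeas _).const_mul _
  refine Measure.ext fun A hA => ?_
  rw [Measure.map_apply hS hA, withDensity_apply _ hA, hpre A]
  have hdisj : Pairwise (Function.onFun Disjoint
      fun n => ({ω | N ω = n} ∩ Sn n ⁻¹' A)) := by
    intro m n hmn
    refine Set.disjoint_left.2 ?_
    rintro ω ⟨h1, -⟩ ⟨h2, -⟩
    exact hmn (h1.symm.trans h2)
  have hmp : ∀ n, MeasurableSet ({ω | N ω = n} ∩ Sn n ⁻¹' A) := fun n =>
    (hN (measurableSet_singleton n)).inter (hSnmeas n hA)
  rw [measure_iUnion hdisj hmp]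
  calc ∑' n, ℙ ({ω | N ω = n} ∩ Sn n ⁻¹' A)
      = ∑' n, ∫⁻ x in A, D n x := by
        refine tsum_congr fun n => ?_
        rcases n with _ | m
        · have h0 : ℙ ({ω | N ω = 0} ∩ Sn 0 ⁻¹' A) = 0 :=
            le_antisymm (hlawN0 ▸ measure_mono Set.inter_subset_left) zero_le
          simp [hD, h0]
        · set n := m + 1
          have hn1 : 1 ≤ n := Nat.succ_le_succ (Nat.zero_le m)
          rw [hindep n A hA, hlawN n hn1]
          have hmap : ℙ (Sn n ⁻¹' A) = ∫⁻ x in A, g n x := by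
            rw [← Measure.map_apply (hSnmeas n) hA, hsum n hn1, withDensity_apply _ hA]
          rw [hmap, hD]
          simp only [if_neg (show n ≠ 0 from Nat.succ_ne_zero m)]
          rw [← lintegral_const_mul' _ _ ENNReal.ofReal_ne_top]
    _ = ∫⁻ x in A, ∑' n, D n x :=
        (lintegral_tsum fun n => (hDmeas n).aemeasurable).symm
    _ = ∫⁻ x in A, ENNReal.ofReal (if 0 < x then
          -(1 / Real.log (1 - θ)) *
            (1 / (x * (1 + (1 - θ) * x / β) ^ α) - 1 / (x * (1 + x / β) ^ α))
        else 0) := by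
        refine lintegral_congr fun x => ?_
        by_cases hx : 0 < x
        · have hhs := aux_pointwise hα hβ hθ0 hθ1 hx
          have hnn : ∀ n : ℕ, (0:ℝ) ≤ (if n = 0 then 0 else
              -(θ ^ n / (n * Real.log (1 - θ))) *
                (x ^ ((n : ℝ) - 1) /
                  (β ^ n * (Real.Gamma n * Real.Gamma α / Real.Gamma (n + α)) *
                    (1 + x / β) ^ ((n : ℝ) + α)))) := by
            intro n
            rcases n with _ | m
            · simp
            · set n := m + 1
              rw [if_neg (Nat.succ_ne_zero m)]
              have hp : (0:ℝ) ≤ -(θ ^ n / (n * Real.log (1 - θ))) := by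
                rw [neg_nonneg]
                apply div_nonpos_of_nonneg_of_nonpos (by positivity)
                have : (0:ℝ) < (n:ℝ) := by positivity
                nlinarith
              have hq : (0:ℝ) ≤ x ^ ((n : ℝ) - 1) /
                  (β ^ n * (Real.Gamma n * Real.Gamma α / Real.Gamma (n + α)) *
                    (1 + x / β) ^ ((n : ℝ) + α)) := by
                have h1 : (0:ℝ) < Real.Gamma ((n:ℕ) : ℝ) :=
                  Real.Gamma_pos_of_pos (by positivity)
                have h2 : (0:ℝ) < Real.Gamma α := Real.Gamma_pos_of_pos hα
                have h3 : (0:ℝ) < Real.Gamma (((n:ℕ) : ℝ) + α) :=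
                  Real.Gamma_pos_of_pos (by positivity)
                have h4 : (0:ℝ) < 1 + x / β := by positivity
                have h5 : (0:ℝ) < x ^ ((n : ℝ) - 1) := Real.rpow_pos_of_pos hx _
                have h6 : (0:ℝ) < (1 + x / β) ^ ((n : ℝ) + α) :=
                  Real.rpow_pos_of_pos h4 _
                positivity
              exact mul_nonneg hp hq
          have hterm : ∀ n : ℕ, D n x = ENNReal.ofReal (if n = 0 then 0 else
              -(θ ^ n / (n * Real.log (1 - θ))) *
                (x ^ ((n : ℝ) - 1) /
                  (β ^ n * (Real.Gamma n * Real.Gamma α / Real.Gamma (n + α)) *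
                    (1 + x / β) ^ ((n : ℝ) + α)))) := by
            intro n
            rcases n with _ | m
            · simp [hD]
            · set n := m + 1
              rw [hD]
              simp only [if_neg (show n ≠ 0 from Nat.succ_ne_zero m)]
              rw [hg]
              simp only [if_pos hx]
              rw [← ENNReal.ofReal_mul]
              rw [neg_nonneg]
              apply div_nonpos_of_nonneg_of_nonpos (by positivity)
              have : (0:ℝ) < (n:ℝ) := by positivity
              nlinarith
          rw [tsum_congr hterm, ← ENNReal.ofReal_tsum_of_nonneg hnn hhs.summable,
            hhs.tsum_eq, if_pos hx]
        · have : ∀ n : ℕ, D n x = 0 := by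
            intro n
            rcases n with _ | m
            · simp [hD]
            · simp [hD, hg, if_neg hx]
          rw [tsum_congr this, if_neg hx]
          simp
end
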